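/- arXiv:2007.07609 — 13 statements merged into one kernel-verified Lean document; each statement's English description precedes it below -/
import Mathlib

section
/- If the walk-multiplet condition holds for all powers k ∈ {0,...,N−1}, then it holds for all non-negative integers k: given a real N×N matrix H and a vector g ∈ ℝ^N such that (H^k g)_u = p·(H^k g)_v for all k ∈ {0,...,N−1}, the same equality holds for every non-negative integer k. -/
/-- If the walk-multiplet condition holds for all powers `k ∈ {0,…,N−1}`, then it
holds for all non-negative integers `k` (by Cayley–Hamilton). -/
theorem stmt3 {N : ℕ} (H : Matrix (Fin N) (Fin N) ℝ) (g : Fin N → ℝ)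
    (u v : Fin N) (p : ℝ) (hp : p = 1 ∨ p = -1)
    (h : ∀ k : ℕ, k < N → ((H ^ k).mulVec g) u = p * ((H ^ k).mulVec g) v) :
    ∀ k : ℕ, ((H ^ k).mulVec g) u = p * ((H ^ k).mulVec g) v := by
  have hchar := Matrix.aeval_self_charpoly H
  have hdeg : H.charpoly.natDegree = N := by
    simpa using H.charpoly_natDegree_eq_dim
  have hsum := H.charpoly_monic.as_sum
  rw [hdeg] at hsum
  rw [hsum] at hchar
  simp only [map_add, map_sum, map_mul, Polynomial.aeval_X_pow, Polynomial.aeval_C,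
    Algebra.smul_def] at hchar
  have hHN : H ^ N = -∑ i ∈ Finset.range N,
      algebraMap ℝ (Matrix (Fin N) (Fin N) ℝ) (H.charpoly.coeff i) * H ^ i := by
    linear_combination (norm := noncomm_ring) hchar
  intro k
  induction k using Nat.strong_induction_on with
  | _ k ih =>
    rcases lt_or_ge k N with hk | hk
    · exact h k hk
    · obtain ⟨m, rfl⟩ := Nat.exists_eq_add_of_le hk
      have hdecomp : H ^ (N + m) = -∑ i ∈ Finset.range N,
          (H.charpoly.coeff i) • H ^ (i + m) := by
        rw [pow_add, hHN]
        rw [neg_mul, Finset.sum_mul]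
        congr 1
        refine Finset.sum_congr rfl fun i _ => ?_
        rw [← Algebra.smul_def, smul_mul_assoc, ← pow_add]
      rw [hdecomp]
      rw [Matrix.neg_mulVec]
      have hsumv : (∑ i ∈ Finset.range N, (H.charpoly.coeff i) • H ^ (i + m)).mulVec g
          = ∑ i ∈ Finset.range N, (H.charpoly.coeff i) • (H ^ (i + m)).mulVec g := by
        ext j
        simp only [Matrix.mulVec, dotProduct, Finset.sum_apply, Matrix.sum_apply,
          Matrix.smul_apply, smul_eq_mul, Pi.smul_apply, Finset.sum_mul, mul_assoc]
        rw [Finset.sum_comm]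
        simp [Finset.mul_sum]
      rw [hsumv]
      simp only [Pi.neg_apply, Finset.sum_apply, Pi.smul_apply, smul_eq_mul]
      rw [mul_neg, Finset.mul_sum]
      congr 1
      refine Finset.sum_congr rfl fun i hi => ?_
      have hi' : i + m < N + m := by
        simp only [Finset.mem_range] at hi; omega
      rw [ih (i + m) hi', mul_left_comm]
end

section
/- Walk singlet extension preserves cospectrality: let G be a real symmetric N×N matrix with cospectral vertices u, v, and let g ∈ ℝ^N satisfy (G^k g)_u = p·(G^k g)_v for all k ∈ ℕ with p ∈ {+1,−1}. Define the (N+1)×(N+1) symmetric matrix H as the block matrix with G in the top-left block, g as the last column (and g^T as the last row), and 0 in the bottom-right entry. Then (H^k)_{uu} = (H^k)_{vv} for all non-negative integers k. -/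
open Matrix Polynomial

/-- Walk singlet extension preserves cospectrality: the cospectral pair `u, v` of `G`
remains cospectral in the weighted cone `H = [[G, g],[gᵀ, 0]]` over a walk multiplet
with weighted indicator vector `g`. -/
theorem stmt5 {N : ℕ} (G : Matrix (Fin N) (Fin N) ℝ) (hsymm : G.IsSymm)
    (u v : Fin N) (g : Fin N → ℝ) (p : ℝ) (hp : p = 1 ∨ p = -1)
    (hcosp : ∀ k : ℕ, (G ^ k) u u = (G ^ k) v v)
    (hmul : ∀ k : ℕ, ((G ^ k).mulVec g) u = p * ((G ^ k).mulVec g) v)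
    (H : Matrix (Fin N ⊕ Unit) (Fin N ⊕ Unit) ℝ)
    (hH : H = Matrix.fromBlocks G (Matrix.of fun i _ => g i)
      (Matrix.of fun _ j => g j) 0) :
    ∀ k : ℕ, (H ^ k) (Sum.inl u) (Sum.inl u) = (H ^ k) (Sum.inl v) (Sum.inl v) := by
  have hp2 : p * p = 1 := by rcases hp with h | h <;> simp [h]
  have expand : ∀ P : Polynomial ℝ, Polynomial.aeval G P
      = ∑ i ∈ Finset.range (P.natDegree + 1), P.coeff i • G ^ i :=
    fun P => Polynomial.aeval_eq_sum_range (p := P) G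
  have hmv : ∀ (n : ℕ) (c : ℕ → ℝ) (a : Fin N),
      ((∑ i ∈ Finset.range n, c i • G ^ i).mulVec g) a
        = ∑ i ∈ Finset.range n, c i * ((G ^ i).mulVec g) a := by
    intro n c a
    simp only [Matrix.mulVec, dotProduct, Matrix.sum_apply, Matrix.smul_apply,
      smul_eq_mul, Finset.sum_mul, Finset.mul_sum, mul_assoc]
    exact Finset.sum_comm
  have L1 : ∀ P : Polynomial ℝ, (Polynomial.aeval G P) u u = (Polynomial.aeval G P) v v := by
    intro P
    rw [expand]
    simp only [Matrix.sum_apply, Matrix.smul_apply, smul_eq_mul]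
    exact Finset.sum_congr rfl fun i _ => by rw [hcosp i]
  have L2 : ∀ P : Polynomial ℝ, ((Polynomial.aeval G P).mulVec g) u
      = p * ((Polynomial.aeval G P).mulVec g) v := by
    intro P
    rw [expand, hmv, hmv, Finset.mul_sum]
    exact Finset.sum_congr rfl fun i _ => by rw [hmul i]; ring
  have L3 : ∀ P : Polynomial ℝ, (Polynomial.aeval G P)ᵀ = Polynomial.aeval G P := by
    intro P
    rw [expand]
    simp [Matrix.transpose_sum, Matrix.transpose_smul, Matrix.transpose_pow, hsymm.eq]
  have hsy : ∀ (P : Polynomial ℝ) (i j : Fin N),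
      (Polynomial.aeval G P) i j = (Polynomial.aeval G P) j i := by
    intro P i j
    conv_lhs => rw [← L3 P]
    exact Matrix.transpose_apply _ i j
  have L4 : ∀ (P : Polynomial ℝ) (w : Fin N),
      (∑ j, g j * (Polynomial.aeval G P) j w) = ((Polynomial.aeval G P).mulVec g) w := by
    intro P w
    simp only [Matrix.mulVec, dotProduct]
    exact Finset.sum_congr rfl fun j _ => by rw [hsy P w j, mul_comm]
  have sumswap : ∀ (f h : Fin N → ℝ) (c : ℝ),
      (∑ j, f j * (c * h j)) = c * ∑ j, f j * h j := by
    intro f h c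
    rw [Finset.mul_sum]
    exact Finset.sum_congr rfl fun j _ => by ring
  have key : ∀ k : ℕ, ∃ P Q : Polynomial ℝ,
      (∀ a, (H ^ k) (Sum.inl a) (Sum.inl u)
        = (Polynomial.aeval G P) a u + ((Polynomial.aeval G Q).mulVec g) a) ∧
      (∀ a, (H ^ k) (Sum.inl a) (Sum.inl v)
        = (Polynomial.aeval G P) a v + p * ((Polynomial.aeval G Q).mulVec g) a) ∧
      ((H ^ k) (Sum.inr ()) (Sum.inl u) = p * (H ^ k) (Sum.inr ()) (Sum.inl v)) := by
    intro k
    induction k with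
    | zero =>
      refine ⟨1, 0, ?_, ?_, ?_⟩ <;>
        simp [Matrix.one_apply, Sum.inl.injEq]
    | succ k ih =>
      obtain ⟨P, Q, hU, hV, hT⟩ := ih
      set t : ℝ := (H ^ k) (Sum.inr ()) (Sum.inl u) with ht
      set t' : ℝ := (H ^ k) (Sum.inr ()) (Sum.inl v) with ht'
      have htt' : t' = p * t := by rw [hT, ← mul_assoc, hp2, one_mul]
      have hentry : ∀ (a : Fin N) (w : Fin N),
          (H ^ (k+1)) (Sum.inl a) (Sum.inl w)
          = (∑ j, G a j * (H ^ k) (Sum.inl j) (Sum.inl w))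
            + g a * (H ^ k) (Sum.inr ()) (Sum.inl w) := by
        intro a w
        rw [pow_succ', Matrix.mul_apply, Fintype.sum_sum_type]
        simp [hH]
      have hentry' : ∀ (w : Fin N),
          (H ^ (k+1)) (Sum.inr ()) (Sum.inl w)
          = ∑ j, g j * (H ^ k) (Sum.inl j) (Sum.inl w) := by
        intro w
        rw [pow_succ', Matrix.mul_apply, Fintype.sum_sum_type]
        simp [hH]
      have haevalXP : ∀ (R : Polynomial ℝ) (a : Fin N) (w : Fin N),
          (Polynomial.aeval G (X * R)) a w = ∑ j, G a j * (Polynomial.aeval G R) j w := by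
        intro R a w
        rw [_root_.map_mul, Polynomial.aeval_X, Matrix.mul_apply]
      have hQ' : ∀ a : Fin N, ((Polynomial.aeval G (X * Q + C t)).mulVec g) a
          = (∑ j, G a j * ((Polynomial.aeval G Q).mulVec g) j) + g a * t := by
        intro a
        rw [_root_.map_add, _root_.map_mul, Polynomial.aeval_X, Polynomial.aeval_C,
          Matrix.add_mulVec]
        have h1 : ((G * Polynomial.aeval G Q).mulVec g) a
            = ∑ j, G a j * ((Polynomial.aeval G Q).mulVec g) j := by
          rw [← Matrix.mulVec_mulVec]
          simp [Matrix.mulVec, dotProduct]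
        have h2 : ((algebraMap ℝ (Matrix (Fin N) (Fin N) ℝ) t).mulVec g) a = g a * t := by
          rw [Algebra.algebraMap_eq_smul_one, Matrix.smul_mulVec, Matrix.one_mulVec]
          simp [mul_comm]
        rw [Pi.add_apply, h1, h2]
      refine ⟨X * P, X * Q + C t, ?_, ?_, ?_⟩
      · intro a
        rw [hentry a u, haevalXP, hQ', ← ht]
        simp only [hU, mul_add, Finset.sum_add_distrib]
        ring
      · intro a
        rw [hentry a v, haevalXP, hQ', ← ht']
        simp only [hV, mul_add, Finset.sum_add_distrib, htt']
        rw [sumswap (G a) (fun j => ((Polynomial.aeval G Q).mulVec g) j) p]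
        ring
      · rw [hentry' u, hentry' v]
        simp only [hU, hV, mul_add, Finset.sum_add_distrib]
        rw [sumswap g (fun j => ((Polynomial.aeval G Q).mulVec g) j) p, L4 P u, L4 P v, L2 P]
        rw [← mul_assoc p p, hp2, one_mul]
  intro k
  obtain ⟨P, Q, hU, hV, _⟩ := key k
  rw [hU u, hV v, L1 P, L2 Q]
end

section
/- The tip of a weighted cone over a walk multiplet is a walk singlet: with G, g, p, and H the weighted cone as above, the new vertex c = N+1 satisfies (H^k)_{uc} = p·(H^k)_{vc} for all non-negative integers k. -/
/-!
The vectors `x` with `(G^j x)_u = p (G^j x)_v` for every `j` form a `G`-invariant subspace, and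
the walk-multiplet hypothesis says that `g` lies in it. Restricted to the old vertices, the
tip column of `H^(k+1)` is `G` applied to that of `H^k` plus a multiple of `g`, so it stays in
the subspace; taking `j = 0` gives the claim.
-/

open Matrix

namespace Matrix

variable {R n : Type*} [CommSemiring R] [Fintype n] [DecidableEq n]

def walkMultipletSubmodule (G : Matrix n n R) (u v : n) (p : R) : Submodule R (n → R) where
  carrier := {x | ∀ j : ℕ, (G ^ j *ᵥ x) u = p * (G ^ j *ᵥ x) v}
  zero_mem' := by simp
  add_mem' {x y} hx hy j := by simp only [mulVec_add, Pi.add_apply, hx j, hy j, mul_add]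
  smul_mem' c x hx j := by
    simp only [mulVec_smul, Pi.smul_apply, smul_eq_mul, hx j]
    ring

theorem mem_walkMultipletSubmodule {G : Matrix n n R} {u v : n} {p : R} {x : n → R} :
    x ∈ walkMultipletSubmodule G u v p ↔ ∀ j : ℕ, (G ^ j *ᵥ x) u = p * (G ^ j *ᵥ x) v :=
  Iff.rfl

theorem mulVec_mem_walkMultipletSubmodule {G : Matrix n n R} {u v : n} {p : R} {x : n → R}
    (hx : x ∈ walkMultipletSubmodule G u v p) : G *ᵥ x ∈ walkMultipletSubmodule G u v p := by
  intro j
  simpa only [mulVec_mulVec, ← pow_succ] using hx (j + 1)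

theorem fromBlocks_pow_succ_col_inl (G : Matrix n n R) (g : n → R) (C : Matrix Unit n R)
    (d : Matrix Unit Unit R) (k : ℕ) :
    (fun i => (fromBlocks G (of fun i _ => g i) C d ^ (k + 1)) (.inl i) (.inr ())) =
      (G *ᵥ fun i => (fromBlocks G (of fun i _ => g i) C d ^ k) (.inl i) (.inr ())) +
        (fromBlocks G (of fun i _ => g i) C d ^ k) (.inr ()) (.inr ()) • g := by
  ext i
  rw [pow_succ', mul_apply, Fintype.sum_sum_type]
  simp [mulVec, dotProduct, mul_comm]

theorem fromBlocks_pow_col_inl_mem (G : Matrix n n R) (g : n → R) (C : Matrix Unit n R)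
    (d : Matrix Unit Unit R) (S : Submodule R (n → R)) (hGS : ∀ x ∈ S, G *ᵥ x ∈ S) (hg : g ∈ S)
    (k : ℕ) : (fun i => (fromBlocks G (of fun i _ => g i) C d ^ k) (.inl i) (.inr ())) ∈ S := by
  induction k with
  | zero =>
    convert S.zero_mem using 1
    ext i
    simp
  | succ k ih =>
    rw [fromBlocks_pow_succ_col_inl]
    exact S.add_mem (hGS _ ih) (S.smul_mem _ hg)

end Matrix

theorem stmt6_general {N : ℕ} (G : Matrix (Fin N) (Fin N) ℝ)
    (u v : Fin N) (g : Fin N → ℝ) (p : ℝ)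
    (hmul : ∀ k : ℕ, ((G ^ k).mulVec g) u = p * ((G ^ k).mulVec g) v)
    (H : Matrix (Fin N ⊕ Unit) (Fin N ⊕ Unit) ℝ)
    (hH : H = Matrix.fromBlocks G (Matrix.of fun i _ => g i)
      (Matrix.of fun _ j => g j) 0) :
    ∀ k : ℕ, (H ^ k) (Sum.inl u) (Sum.inr ()) = p * (H ^ k) (Sum.inl v) (Sum.inr ()) := by
  intro k
  subst hH
  have hcol := fromBlocks_pow_col_inl_mem G g (of fun _ j => g j) 0
    (walkMultipletSubmodule G u v p) (fun _ => mulVec_mem_walkMultipletSubmodule)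
    (mem_walkMultipletSubmodule.mpr hmul) k
  simpa using hcol 0

/-- The tip of a weighted cone over a walk multiplet is a walk singlet:
`(H^k)_{u,c} = p (H^k)_{v,c}` for the new tip vertex `c`. -/
theorem stmt6 {N : ℕ} (G : Matrix (Fin N) (Fin N) ℝ) (hsymm : G.IsSymm)
    (u v : Fin N) (g : Fin N → ℝ) (p : ℝ) (hp : p = 1 ∨ p = -1)
    (hcosp : ∀ k : ℕ, (G ^ k) u u = (G ^ k) v v)
    (hmul : ∀ k : ℕ, ((G ^ k).mulVec g) u = p * ((G ^ k).mulVec g) v)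
    (H : Matrix (Fin N ⊕ Unit) (Fin N ⊕ Unit) ℝ)
    (hH : H = Matrix.fromBlocks G (Matrix.of fun i _ => g i)
      (Matrix.of fun _ j => g j) 0) :
    ∀ k : ℕ, (H ^ k) (Sum.inl u) (Sum.inr ()) = p * (H ^ k) (Sum.inl v) (Sum.inr ()) :=
  stmt6_general G u v g p hmul H hH
end

section
/- Walk multiplets of equal parity are preserved under cone extension: with G, g, p as above and H the weighted cone [[G, g],[g^T, 0]], if h ∈ ℝ^N satisfies (G^k h)_u = p·(G^k h)_v for all k ∈ ℕ (same parity p), then the vector h' ∈ ℝ^{N+1} extending h by a zero last component satisfies (H^k h')_u = p·(H^k h')_v for all non-negative integers k. -/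
/-- Walk multiplets of equal parity are preserved under cone extension: if `h` is a
walk multiplet indicator vector of `G` with the same parity `p` as the multiplet `g`
used for the cone, then its zero-extension `h'` is a walk multiplet of the cone `H`. -/
theorem stmt7 {N : ℕ} (G : Matrix (Fin N) (Fin N) ℝ) (hsymm : G.IsSymm)
    (u v : Fin N) (g h : Fin N → ℝ) (p : ℝ) (hp : p = 1 ∨ p = -1)
    (hcosp : ∀ k : ℕ, (G ^ k) u u = (G ^ k) v v)
    (hmulg : ∀ k : ℕ, ((G ^ k).mulVec g) u = p * ((G ^ k).mulVec g) v)
    (hmulh : ∀ k : ℕ, ((G ^ k).mulVec h) u = p * ((G ^ k).mulVec h) v)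
    (H : Matrix (Fin N ⊕ Unit) (Fin N ⊕ Unit) ℝ)
    (hH : H = Matrix.fromBlocks G (Matrix.of fun i _ => g i)
      (Matrix.of fun _ j => g j) 0)
    (h' : Fin N ⊕ Unit → ℝ) (hh' : h' = Sum.elim h 0) :
    ∀ k : ℕ, ((H ^ k).mulVec h') (Sum.inl u) = p * ((H ^ k).mulVec h') (Sum.inl v) := by
  have key : ∀ k : ℕ, ∃ (x : Fin N → ℝ) (c : ℝ),
      (H ^ k).mulVec h' = Sum.elim x (fun _ => c) ∧
      (∀ m : ℕ, ((G ^ m).mulVec x) u = p * ((G ^ m).mulVec x) v) := by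
    intro k
    induction k with
    | zero =>
      refine ⟨h, 0, ?_, hmulh⟩
      simp [hh']
      rfl
    | succ k ih =>
      obtain ⟨x, c, hxc, hx⟩ := ih
      refine ⟨G.mulVec x + c • g, ∑ j, g j * x j, ?_, ?_⟩
      · rw [pow_succ', ← Matrix.mulVec_mulVec, hxc, hH]
        rw [Matrix.fromBlocks_mulVec]
        ext (i | i)
        · simp [Matrix.mulVec, dotProduct, mul_comm]
        · simp [Matrix.mulVec, dotProduct]
      · intro m
        rw [Matrix.mulVec_add, Matrix.mulVec_smul, Matrix.mulVec_mulVec, ← pow_succ]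
        simp only [Pi.add_apply, Pi.smul_apply, smul_eq_mul]
        rw [hx (m + 1), hmulg m]
        ring
  intro k
  obtain ⟨x, c, hxc, hx⟩ := key k
  rw [hxc]
  simpa using hx 0
end

section
/- Vertices connected only through a walk singlet are walk singlets: let H be a real symmetric matrix with cospectral vertices u, v and suppose c is a walk singlet relative to (u,v) with parity p, i.e., (H^k)_{uc} = p·(H^k)_{vc} for all k. Suppose C is a set of vertices disjoint from the rest such that every walk from u or v to any vertex of C passes through c (formally: H has block structure where the only connections of the subgraph C to the remainder go through c). Then every vertex c' ∈ C satisfies (H^k)_{uc'} = p·(H^k)_{vc'} for all non-negative integers k. -/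
/-- Vertices connected only through a walk singlet are walk singlets: on vertex set
`A ⊕ C`, if all edges between `A` and `C` are incident to the singlet `c ∈ A`, then
every vertex of `C` is a walk singlet of the same parity relative to `(u,v)`. -/
theorem stmt8 {A C : Type*} [Fintype A] [Fintype C] [DecidableEq A] [DecidableEq C]
    (H : Matrix (A ⊕ C) (A ⊕ C) ℝ) (hsymm : H.IsSymm)
    (u v c : A) (p : ℝ) (hp : p = 1 ∨ p = -1)
    (hblock : ∀ a : A, a ≠ c → ∀ b : C, H (Sum.inl a) (Sum.inr b) = 0)
    (hcosp : ∀ k : ℕ, (H ^ k) (Sum.inl u) (Sum.inl u) = (H ^ k) (Sum.inl v) (Sum.inl v))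
    (hsinglet : ∀ k : ℕ, (H ^ k) (Sum.inl u) (Sum.inl c)
      = p * (H ^ k) (Sum.inl v) (Sum.inl c)) :
    ∀ c' : C, ∀ k : ℕ, (H ^ k) (Sum.inl u) (Sum.inr c')
      = p * (H ^ k) (Sum.inl v) (Sum.inr c') := by
  intro c' k
  induction k generalizing c' with
  | zero => simp [Matrix.one_apply]
  | succ k ih =>
    rw [pow_succ, Matrix.mul_apply, Matrix.mul_apply, Finset.mul_sum]
    apply Finset.sum_congr rfl
    intro x _
    cases x with
    | inl a =>
      by_cases ha : a = c
      · subst ha; rw [hsinglet k]; ring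
      · rw [hblock a ha c']; ring
    | inr b' => rw [ih b']; ring
end

section
/- Walk multiplet interconnection preserves cospectrality (rank-one symmetric perturbation version): let G be a real symmetric N×N matrix with cospectral vertices u, v, and let g, h ∈ ℝ^N be weighted indicator vectors of two walk multiplets of the same parity p relative to (u,v), both with vanishing u and v components (g_u = g_v = h_u = h_v = 0). Then u and v are cospectral in H = G + g h^T + h g^T, i.e., (H^k)_{uu} = (H^k)_{vv} for all non-negative integers k. -/
section Aux

variable {N : ℕ}

lemma aux_mul_vecMulVec (A : Matrix (Fin N) (Fin N) ℝ) (x y : Fin N → ℝ) :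
    A * Matrix.vecMulVec x y = Matrix.vecMulVec (A.mulVec x) y := by
  ext i j
  simp only [Matrix.mul_apply, Matrix.vecMulVec_apply, Matrix.mulVec, dotProduct,
    Finset.sum_mul]
  exact Finset.sum_congr rfl fun k _ => by ring

lemma aux_vecMulVec_mul (A : Matrix (Fin N) (Fin N) ℝ) (hA : A.IsSymm) (x y : Fin N → ℝ) :
    Matrix.vecMulVec x y * A = Matrix.vecMulVec x (A.mulVec y) := by
  ext i j
  simp only [Matrix.mul_apply, Matrix.vecMulVec_apply, Matrix.mulVec, dotProduct,
    Finset.mul_sum]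
  refine Finset.sum_congr rfl fun k _ => ?_
  have : A k j = A j k := by
    conv_lhs => rw [← hA]
    rfl
  rw [this]; ring

lemma aux_vecMulVec_mulVec (x y w : Fin N → ℝ) :
    (Matrix.vecMulVec x y).mulVec w = (dotProduct y w) • x := by
  ext i
  simp only [Matrix.mulVec, Matrix.vecMulVec_apply, dotProduct, Pi.smul_apply,
    smul_eq_mul, Finset.sum_mul]
  exact Finset.sum_congr rfl fun k _ => by ring

end Aux

/-- Walk multiplet interconnection preserves cospectrality: if `g, h` are indicator
vectors of walk multiplets of equal parity `p` relative to the cospectral pair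
`(u,v)` of `G`, vanishing on `u` and `v`, then `u, v` remain cospectral in
`H = G + g hᵀ + h gᵀ`. -/
theorem stmt9 {N : ℕ} (G : Matrix (Fin N) (Fin N) ℝ) (hsymm : G.IsSymm)
    (u v : Fin N) (g h : Fin N → ℝ) (p : ℝ) (hp : p = 1 ∨ p = -1)
    (hcosp : ∀ k : ℕ, (G ^ k) u u = (G ^ k) v v)
    (hmulg : ∀ k : ℕ, ((G ^ k).mulVec g) u = p * ((G ^ k).mulVec g) v)
    (hmulh : ∀ k : ℕ, ((G ^ k).mulVec h) u = p * ((G ^ k).mulVec h) v)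
    (hgu : g u = 0) (hgv : g v = 0) (hhu : h u = 0) (hhv : h v = 0)
    (H : Matrix (Fin N) (Fin N) ℝ)
    (hH : H = G + Matrix.vecMulVec g h + Matrix.vecMulVec h g) :
    ∀ k : ℕ, (H ^ k) u u = (H ^ k) v v := by
  have hp2 : p * p = 1 := by rcases hp with rfl | rfl <;> norm_num
  -- "Good" vectors: same multiplet relation w.r.t. G
  set Good : (Fin N → ℝ) → Prop :=
    fun w => ∀ j : ℕ, ((G ^ j).mulVec w) u = p * ((G ^ j).mulVec w) v with hGood
  have good_add : ∀ w₁ w₂, Good w₁ → Good w₂ → Good (w₁ + w₂) := by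
    intro w₁ w₂ h1 h2 j
    simp [Matrix.mulVec_add, h1 j, h2 j]; ring
  have good_smul : ∀ (c : ℝ) w, Good w → Good (c • w) := by
    intro c w hw j
    simp [Matrix.mulVec_smul, hw j]; ring
  have good_G : ∀ w, Good w → Good (G.mulVec w) := by
    intro w hw j
    have : (G ^ j).mulVec (G.mulVec w) = (G ^ (j + 1)).mulVec w := by
      rw [Matrix.mulVec_mulVec, ← pow_succ]
    rw [this]; exact hw (j + 1)
  have good_H : ∀ w, Good w → Good (H.mulVec w) := by
    intro w hw
    rw [hH, Matrix.add_mulVec, Matrix.add_mulVec, aux_vecMulVec_mulVec,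
      aux_vecMulVec_mulVec]
    exact good_add _ _ (good_add _ _ (good_G w hw) (good_smul _ _ hmulg)) (good_smul _ _ hmulh)
  have good_Hpow : ∀ (k : ℕ) (w), Good w → Good ((H ^ k).mulVec w) := by
    intro k
    induction k with
    | zero => intro w hw; simpa using hw
    | succ n ih =>
      intro w hw
      have : (H ^ (n + 1)).mulVec w = (H ^ n).mulVec (H.mulVec w) := by
        rw [Matrix.mulVec_mulVec, ← pow_succ]
      rw [this]
      exact ih _ (good_H w hw)
  have hGsymm : ∀ m : ℕ, (G ^ m).IsSymm := fun m => hsymm.pow m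
  -- the key diagonal invariant
  have diag : ∀ (k m : ℕ), (H ^ k * G ^ m) u u = (H ^ k * G ^ m) v v := by
    intro k
    induction k with
    | zero => intro m; simpa using hcosp m
    | succ n ih =>
      intro m
      have hsplit : H * G ^ m
          = G ^ (m + 1) + Matrix.vecMulVec g ((G ^ m).mulVec h)
            + Matrix.vecMulVec h ((G ^ m).mulVec g) := by
        rw [hH, add_mul, add_mul, aux_vecMulVec_mul _ (hGsymm m),
          aux_vecMulVec_mul _ (hGsymm m), ← pow_succ']
      have expand : H ^ (n + 1) * G ^ m
          = H ^ n * G ^ (m + 1)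
            + Matrix.vecMulVec ((H ^ n).mulVec g) ((G ^ m).mulVec h)
            + Matrix.vecMulVec ((H ^ n).mulVec h) ((G ^ m).mulVec g) := by
        rw [pow_succ, mul_assoc, hsplit, mul_add, mul_add,
          aux_mul_vecMulVec, aux_mul_vecMulVec]
      have hg0 : ((H ^ n).mulVec g) u = p * ((H ^ n).mulVec g) v := by
        simpa using good_Hpow n g hmulg 0
      have hh0 : ((H ^ n).mulVec h) u = p * ((H ^ n).mulVec h) v := by
        simpa using good_Hpow n h hmulh 0
      have hgm : ((G ^ m).mulVec g) u = p * ((G ^ m).mulVec g) v := hmulg m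
      have hhm : ((G ^ m).mulVec h) u = p * ((G ^ m).mulVec h) v := hmulh m
      simp only [expand, Matrix.add_apply, Matrix.vecMulVec_apply]
      rw [ih (m + 1), hg0, hh0, hgm, hhm]
      have hp2' : p ^ 2 = 1 := by rw [sq, hp2]
      ring_nf
      rw [hp2']
      ring
  intro k
  have := diag k 0
  simpa using this
end

section
/- Interconnecting a cospectral pair preserves cospectrality: if u, v are cospectral vertices of a real symmetric matrix G, then for any t ∈ ℝ they remain cospectral in the matrix H obtained from G by adding t to the entries (u,v) and (v,u) and adding t to both diagonal entries (u,u) and (v,v). -/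
open Matrix

private lemma aux_vmv {N : ℕ} (a b x : Fin N → ℝ) :
    Matrix.vecMulVec a b *ᵥ x = (b ⬝ᵥ x) • a := by
  funext i
  simp only [Matrix.mulVec, Matrix.vecMulVec_apply, dotProduct, Pi.smul_apply,
    smul_eq_mul, Finset.sum_mul]
  exact Finset.sum_congr rfl fun j _ => by ring

private lemma aux_eval {N : ℕ} (M : Matrix (Fin N) (Fin N) ℝ) (u v : Fin N) :
    (Pi.single u (1:ℝ) + Pi.single v 1) ⬝ᵥ (M *ᵥ (Pi.single u 1 - Pi.single v 1))
      = (M u u + M v u) - (M u v + M v v) := by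
  simp [add_dotProduct, single_dotProduct, Matrix.mulVec_sub,
    Matrix.mulVec_single, Pi.sub_apply]

private lemma aux_symm_vmv {N : ℕ} (a : Fin N → ℝ) :
    (Matrix.vecMulVec a a).IsSymm := by
  unfold Matrix.IsSymm
  ext i j
  simp [Matrix.vecMulVec_apply, mul_comm]

/-- Interconnecting a cospectral pair preserves cospectrality: adding an edge of
weight `t` between `u` and `v` together with loops of weight `t` on both `u` and `v`
keeps `u, v` cospectral. -/
theorem stmt10 {N : ℕ} (G : Matrix (Fin N) (Fin N) ℝ) (hsymm : G.IsSymm)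
    (u v : Fin N) (t : ℝ)
    (hcosp : ∀ k : ℕ, (G ^ k) u u = (G ^ k) v v)
    (H : Matrix (Fin N) (Fin N) ℝ)
    (hH : H = G + t • Matrix.vecMulVec
      (Pi.single u (1 : ℝ) + Pi.single v (1 : ℝ))
      (Pi.single u (1 : ℝ) + Pi.single v (1 : ℝ))) :
    ∀ k : ℕ, (H ^ k) u u = (H ^ k) v v := by
  set w : Fin N → ℝ := Pi.single u 1 + Pi.single v 1 with hw
  set d : Fin N → ℝ := Pi.single u 1 - Pi.single v 1 with hd
  set W : Matrix (Fin N) (Fin N) ℝ := Matrix.vecMulVec w w with hW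
  have hGk : ∀ m : ℕ, ((G ^ m) : Matrix (Fin N) (Fin N) ℝ).IsSymm := fun m => hsymm.pow m
  have hG0 : ∀ m : ℕ, w ⬝ᵥ ((G ^ m) *ᵥ d) = 0 := by
    intro m
    rw [hw, hd, aux_eval]
    have h1 := hcosp m
    have h2 : (G ^ m) v u = (G ^ m) u v := by
      conv_lhs => rw [← (hGk m)]
      rfl
    rw [h1, h2]; ring
  have hHW : ∀ m : ℕ, H * G ^ m = G ^ (m + 1) + t • (W * G ^ m) := by
    intro m
    rw [hH, add_mul, smul_mul_assoc, ← pow_succ']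
  have key : ∀ j : ℕ, ∀ m : ℕ, w ⬝ᵥ ((H ^ j * G ^ m) *ᵥ d) = 0 := by
    intro j
    induction j with
    | zero => intro m; simpa using hG0 m
    | succ j ih =>
      intro m
      have hsplit : H ^ (j + 1) * G ^ m
          = H ^ j * G ^ (m + 1) + t • (H ^ j * (W * G ^ m)) := by
        rw [pow_succ, mul_assoc, hHW m, mul_add, mul_smul_comm]
      rw [hsplit, Matrix.add_mulVec, dotProduct_add, ih (m + 1)]
      have heq : (t • (H ^ j * (W * G ^ m))) *ᵥ d
          = t • ((H ^ j) *ᵥ (W *ᵥ ((G ^ m) *ᵥ d))) := by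
        rw [Matrix.smul_mulVec, Matrix.mulVec_mulVec, Matrix.mulVec_mulVec, mul_assoc]
      rw [heq, hW, aux_vmv, hG0 m]
      simp
  intro k
  have hHsymm : H.IsSymm := by
    rw [hH]
    exact hsymm.add ((aux_symm_vmv w).smul t)
  have hHk : ((H ^ k) : Matrix (Fin N) (Fin N) ℝ).IsSymm := hHsymm.pow k
  have h := key k 0
  rw [pow_zero, mul_one, hw, hd, aux_eval] at h
  have h2 : (H ^ k) v u = (H ^ k) u v := by
    conv_lhs => rw [← hHk]
    rfl
  rw [h2] at h
  linarith
end

section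
/- Converse of cone extension (single vertex addition): let G be a real symmetric N×N matrix with cospectral vertices u, v, let g ∈ ℝ^N, and let H = [[G, g],[g^T, 0]] be the weighted cone. If u and v are cospectral in H (i.e., (H^k)_{uu} = (H^k)_{vv} for all k ∈ ℕ), then there exists p ∈ {+1,−1} such that (G^k g)_u = p·(G^k g)_v for all non-negative integers k, i.e., g is the weighted indicator vector of a walk multiplet relative to (u,v). -/
/-!
Encode walks by the generating functions `(1 - tM)⁻¹ = Σₖ tᵏ Mᵏ` over `R⟦X⟧`.
The top-left block `T` of `(1 - tH)⁻¹` solves `(1 - tG - t² g gᵀ) T = 1`, so by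
Sherman–Morrison, with `φ = (1 - tG)⁻¹ g` and `s = gᵀ φ` (and `gᵀ (1 - tG)⁻¹ = φᵀ`
since `G` is symmetric),
`(1 - t² s) T_xx = (1 - t² s) (1 - tG)⁻¹_xx + t² φ_x²`.
Cospectrality of `u, v` in `G` and in `H` then gives `φ_u² = φ_v²` in the domain `ℝ⟦X⟧`,
hence `φ_u = ± φ_v`.
-/

open Matrix PowerSeries

variable {R : Type*} [CommRing R] {n : Type*}

def cone (G : Matrix n n R) (g : n → R) : Matrix (n ⊕ Unit) (n ⊕ Unit) R :=
  fromBlocks G (of fun i _ => g i) (of fun _ j => g j) 0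

variable [Fintype n] [DecidableEq n]

noncomputable def walkGenFun (M : Matrix n n R) : Matrix n n R⟦X⟧ :=
  of fun i j => mk fun k => (M ^ k) i j

noncomputable def weightedWalkGenFun (M : Matrix n n R) (g : n → R) : n → R⟦X⟧ :=
  fun i => mk fun k => (M ^ k *ᵥ g) i

@[simp] lemma coeff_walkGenFun (M : Matrix n n R) (i j : n) (k : ℕ) :
    coeff k (walkGenFun M i j) = (M ^ k) i j := by
  simp [walkGenFun]

@[simp] lemma coeff_weightedWalkGenFun (M : Matrix n n R) (g : n → R) (i : n) (k : ℕ) :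
    coeff k (weightedWalkGenFun M g i) = (M ^ k *ᵥ g) i := by
  simp [weightedWalkGenFun]

lemma walkGenFun_eq_one_add_X_smul {M : Matrix n n R} {F : Matrix n n R⟦X⟧}
    (hF : ∀ i j k, coeff k (F i j) = (M ^ (k + 1)) i j) :
    walkGenFun M = 1 + (X : R⟦X⟧) • F := by
  ext i j k
  rcases k with _ | k
  · by_cases h : i = j <;> simp [one_apply, h]
  · by_cases h : i = j <;> simp [one_apply, h, coeff_succ_X_mul, hF]

lemma walkGenFun_eq_one_add_X_smul_map_mul (M : Matrix n n R) :
    walkGenFun M = 1 + (X : R⟦X⟧) • (M.map C * walkGenFun M) :=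
  walkGenFun_eq_one_add_X_smul fun i j k => by
    simp [mul_apply, map_sum, coeff_C_mul, pow_succ']

lemma walkGenFun_mul_one_sub_X_smul_map (M : Matrix n n R) :
    walkGenFun M * (1 - (X : R⟦X⟧) • M.map C) = 1 := by
  have h : walkGenFun M = 1 + (X : R⟦X⟧) • (walkGenFun M * M.map C) :=
    walkGenFun_eq_one_add_X_smul fun i j k => by
      simp [mul_apply, map_sum, coeff_mul_C, pow_succ]
  rw [mul_sub, mul_one, mul_smul_comm]
  nth_rewrite 1 [h]
  abel

lemma walkGenFun_transpose (M : Matrix n n R) : (walkGenFun M)ᵀ = walkGenFun Mᵀ := by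
  ext i j k
  simp [← transpose_pow]

lemma walkGenFun_mulVec (M : Matrix n n R) (g : n → R) :
    walkGenFun M *ᵥ (C ∘ g) = weightedWalkGenFun M g := by
  ext i k
  simp [mulVec, dotProduct, map_sum, coeff_mul_C]

lemma one_sub_X_smul_mul_toBlocks₁₁_walkGenFun_cone (G : Matrix n n R) (g : n → R) :
    (1 - (X : R⟦X⟧) • G.map C) * (walkGenFun (cone G g)).toBlocks₁₁
      = 1 + (X : R⟦X⟧) ^ 2 •
          vecMulVec (C ∘ g) ((C ∘ g) ᵥ* (walkGenFun (cone G g)).toBlocks₁₁) := by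
  set T := (walkGenFun (cone G g)).toBlocks₁₁
  have h := walkGenFun_eq_one_add_X_smul_map_mul (cone G g)
  have hT : ∀ x y, T x y = (1 : Matrix n n R⟦X⟧) x y
      + X * ((G.map C * T) x y + C (g x) * walkGenFun (cone G g) (.inr ()) (.inl y)) := by
    intro x y
    simpa [T, cone, mul_apply, Fintype.sum_sum_type, toBlocks₁₁, one_apply]
      using congrFun (congrFun h (.inl x)) (.inl y)
  have hL : ∀ y, walkGenFun (cone G g) (.inr ()) (.inl y) = X * ((C ∘ g) ᵥ* T) y := by
    intro y
    simpa [T, cone, mul_apply, Fintype.sum_sum_type, toBlocks₁₁, vecMul, dotProduct]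
      using congrFun (congrFun h (.inr ())) (.inl y)
  refine Matrix.ext fun x y => ?_
  rw [sub_mul, one_mul, Matrix.sub_apply, hT]
  simp [hL, vecMulVec_apply]
  ring

lemma toBlocks₁₁_walkGenFun_cone (G : Matrix n n R) (g : n → R) :
    (walkGenFun (cone G g)).toBlocks₁₁ = walkGenFun G
      + (X : R⟦X⟧) ^ 2 • vecMulVec (weightedWalkGenFun G g)
          ((C ∘ g) ᵥ* (walkGenFun (cone G g)).toBlocks₁₁) := by
  set T := (walkGenFun (cone G g)).toBlocks₁₁
  calc T = walkGenFun G * (1 - (X : R⟦X⟧) • G.map C) * T := by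
        rw [walkGenFun_mul_one_sub_X_smul_map, one_mul]
    _ = walkGenFun G * (1 + (X : R⟦X⟧) ^ 2 • vecMulVec (C ∘ g) ((C ∘ g) ᵥ* T)) := by
        rw [mul_assoc, one_sub_X_smul_mul_toBlocks₁₁_walkGenFun_cone]
    _ = _ := by
        rw [mul_add, mul_one, mul_smul_comm, mul_vecMulVec, walkGenFun_mulVec]

lemma walkGenFun_cone_inl_inl {G : Matrix n n R} (hG : G.IsSymm) (g : n → R) (x : n) :
    (1 - X ^ 2 * ((C ∘ g) ⬝ᵥ weightedWalkGenFun G g))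
        * walkGenFun (cone G g) (.inl x) (.inl x)
      = (1 - X ^ 2 * ((C ∘ g) ⬝ᵥ weightedWalkGenFun G g)) * walkGenFun G x x
        + X ^ 2 * weightedWalkGenFun G g x ^ 2 := by
  have hT := toBlocks₁₁_walkGenFun_cone G g
  have hsymm : (C ∘ g) ᵥ* walkGenFun G = weightedWalkGenFun G g := by
    rw [← walkGenFun_mulVec, ← vecMul_transpose, walkGenFun_transpose, hG.eq]
  set T := (walkGenFun (cone G g)).toBlocks₁₁
  set φ := weightedWalkGenFun G g
  set s := (C ∘ g) ⬝ᵥ φ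
  have hw : (C ∘ g) ᵥ* T = φ + (X ^ 2 * s) • ((C ∘ g) ᵥ* T) := by
    conv_lhs => rw [hT]
    rw [vecMul_add, vecMul_smul, vecMul_vecMulVec, hsymm, smul_smul]
  have hwx := congrFun hw x
  have hTx := congrFun (congrFun hT x) x
  simp only [Pi.add_apply, Pi.smul_apply, smul_eq_mul, Matrix.add_apply, Matrix.smul_apply,
    vecMulVec_apply] at hwx hTx
  change _ * T x x = _
  linear_combination (1 - X ^ 2 * s) * hTx + X ^ 2 * φ x * hwx

/-- Converse of cone extension: if the cospectral pair `u, v` of `G` remains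
cospectral in the weighted cone `H = [[G, g],[gᵀ, 0]]`, then `g` is the weighted
indicator vector of a walk multiplet relative to `(u,v)` for some parity `p = ±1`. -/
theorem stmt11 {N : ℕ} (G : Matrix (Fin N) (Fin N) ℝ) (hsymm : G.IsSymm)
    (u v : Fin N) (g : Fin N → ℝ)
    (hcosp : ∀ k : ℕ, (G ^ k) u u = (G ^ k) v v)
    (H : Matrix (Fin N ⊕ Unit) (Fin N ⊕ Unit) ℝ)
    (hH : H = Matrix.fromBlocks G (Matrix.of fun i _ => g i)
      (Matrix.of fun _ j => g j) 0)
    (hcospH : ∀ k : ℕ, (H ^ k) (Sum.inl u) (Sum.inl u)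
      = (H ^ k) (Sum.inl v) (Sum.inl v)) :
    ∃ p : ℝ, (p = 1 ∨ p = -1) ∧
      ∀ k : ℕ, ((G ^ k).mulVec g) u = p * ((G ^ k).mulVec g) v := by
  change H = cone G g at hH
  subst hH
  have hG : walkGenFun G u u = walkGenFun G v v := by ext k; simpa using hcosp k
  have hcone : walkGenFun (cone G g) (.inl u) (.inl u)
      = walkGenFun (cone G g) (.inl v) (.inl v) := by
    ext k; simpa using hcospH k
  have hsq : weightedWalkGenFun G g u ^ 2 = weightedWalkGenFun G g v ^ 2 := by
    refine mul_left_cancel₀ (pow_ne_zero 2 X_ne_zero) ?_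
    linear_combination walkGenFun_cone_inl_inl hsymm g v - walkGenFun_cone_inl_inl hsymm g u
      + (1 - X ^ 2 * ((C ∘ g) ⬝ᵥ weightedWalkGenFun G g)) * (hcone - hG)
  rcases sq_eq_sq_iff_eq_or_eq_neg.1 hsq with h | h
  · exact ⟨1, Or.inl rfl, fun k => by simpa using congrArg (coeff k) h⟩
  · exact ⟨-1, Or.inr rfl, fun k => by simpa using congrArg (coeff k) h⟩
end

section
/- Removal of a walk singlet preserves cospectrality: let G be a real symmetric matrix on vertex set V with cospectral vertices u, v and let c ∈ V \ {u,v} be a walk singlet relative to (u,v), i.e., (G^k)_{uc} = p·(G^k)_{vc} for all k with p ∈ {+1,−1}. Then u and v are cospectral in the submatrix R = G \ c obtained by deleting the row and column indexed by c: (R^k)_{uu} = (R^k)_{vv} for all non-negative integers k. -/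
/-!
Let `H` be `G` with row and column `c` replaced by zeros, so that the powers of `H` restrict to
those of `R`. Splitting a walk from `x` to `w ≠ c` at its last visit to `c` gives, in generating
functions, `∑ₖ ((G ^ (k+1)) x w - (H ^ (k+1)) x w) Xᵏ = W x c * E w`, where `W x c` counts walks
from `x` to `c` and `E w` counts walks from `c` to `w` that never return to `c`. For `x = c` the
left side is the walk series from `c` to `w`, and `W c c` is invertible, so the singlet relation
for walks out of `c` gives `E u = p E v`. Together with `W u c = p W v c` and `p² = 1` the two
products agree, so cospectrality of `u, v` in `G` passes to `H`.
-/

open Finset PowerSeries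

theorem pow_succ_sub_pow_succ_eq_sum_antidiagonal {A : Type*} [Ring A] (a b : A) (n : ℕ) :
    a ^ (n + 1) - b ^ (n + 1) = ∑ ij ∈ antidiagonal n, a ^ ij.1 * (a - b) * b ^ ij.2 := by
  induction n with
  | zero => simp
  | succ n ih =>
    have hshift : ∀ ij ∈ antidiagonal n,
        a ^ (ij.1 + 1) * (a - b) * b ^ ij.2 = a * (a ^ ij.1 * (a - b) * b ^ ij.2) := fun _ _ => by
      rw [pow_succ', mul_assoc, mul_assoc, mul_assoc]
    rw [Nat.sum_antidiagonal_succ, sum_congr rfl hshift, ← mul_sum, ← ih, pow_succ' a, pow_succ' b]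
    simp only [pow_zero, one_mul, sub_mul, mul_sub]
    abel

namespace Matrix

variable {V α : Type*} [DecidableEq V]

/-- `G` with row and column `c` set to zero: the principal submatrix on the complement of `c`,
padded so that it keeps the index type of `G`. -/
def eraseRowCol [Zero α] (G : Matrix V V α) (c : V) : Matrix V V α :=
  of fun i j => if i = c ∨ j = c then 0 else G i j

section Zero

variable [Zero α] (G : Matrix V V α) {c : V}

@[simp]
theorem eraseRowCol_apply_of_ne {i j : V} (hi : i ≠ c) (hj : j ≠ c) :
    G.eraseRowCol c i j = G i j := by
  simp [eraseRowCol, hi, hj]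

@[simp]
theorem eraseRowCol_apply_left (j : V) : G.eraseRowCol c c j = 0 := by
  simp [eraseRowCol]

@[simp]
theorem eraseRowCol_apply_right (i : V) : G.eraseRowCol c i c = 0 := by
  simp [eraseRowCol]

end Zero

section Semiring

variable [Semiring α] [Fintype V] (G : Matrix V V α) {c w : V}

theorem eraseRowCol_pow_apply_left_of_ne (hw : w ≠ c) (m : ℕ) :
    (G.eraseRowCol c ^ m) c w = 0 := by
  cases m with
  | zero => simp [hw.symm]
  | succ m => simp [pow_succ', mul_apply]

theorem submatrix_eraseRowCol_pow (k : ℕ) :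
    (G.eraseRowCol c ^ k).submatrix (Subtype.val : {i // i ≠ c} → V)
        (Subtype.val : {i // i ≠ c} → V) =
      G.submatrix (Subtype.val : {i // i ≠ c} → V) (Subtype.val : {i // i ≠ c} → V) ^ k := by
  induction k with
  | zero => exact submatrix_one _ Subtype.val_injective
  | succ k ih =>
    ext x y
    rw [pow_succ, pow_succ, ← ih]
    simp only [submatrix_apply, mul_apply]
    rw [← sum_erase univ (a := c) (by simp), sum_subtype (univ.erase c) (p := (· ≠ c)) (by simp)]
    exact sum_congr rfl fun j _ => by rw [eraseRowCol_apply_of_ne G j.2 y.2]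

end Semiring

section Ring

variable [Ring α] [Fintype V] (G : Matrix V V α) {c w : V}

theorem sub_eraseRowCol_mul_pow_apply (hw : w ≠ c) (m : ℕ) (y : V) :
    ((G - G.eraseRowCol c) * G.eraseRowCol c ^ m) y w =
      if y = c then (G * G.eraseRowCol c ^ m) c w else 0 := by
  split_ifs with hy
  · subst hy
    simp [mul_apply]
  · refine sum_eq_zero fun z _ => ?_
    by_cases hz : z = c
    · subst hz; simp [eraseRowCol_pow_apply_left_of_ne G hw]
    · simp [hy, hz]

theorem pow_succ_apply_sub_eraseRowCol_pow_succ_apply (hw : w ≠ c) (n : ℕ) (x : V) :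
    (G ^ (n + 1)) x w - (G.eraseRowCol c ^ (n + 1)) x w =
      ∑ ij ∈ antidiagonal n, (G ^ ij.1) x c * (G * G.eraseRowCol c ^ ij.2) c w := by
  rw [← sub_apply, pow_succ_sub_pow_succ_eq_sum_antidiagonal, sum_apply]
  refine sum_congr rfl fun ij _ => ?_
  rw [mul_assoc, mul_apply, sum_eq_single c]
  · rw [sub_eraseRowCol_mul_pow_apply G hw, if_pos rfl]
  · intro y _ hy
    rw [sub_eraseRowCol_mul_pow_apply G hw, if_neg hy, mul_zero]
  · simp

end Ring

section CommRing

variable [CommRing α] [Fintype V] (G : Matrix V V α) (c : V) {u v w : V}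

def walkSeries (x y : V) : α⟦X⟧ :=
  mk fun k => (G ^ k) x y

/-- Coefficient `k` sums the weights of walks of length `k + 1` from `c` to `w` that never return
to `c`. -/
def escapeSeries (w : V) : α⟦X⟧ :=
  mk fun k => (G * G.eraseRowCol c ^ k) c w

theorem isUnit_walkSeries_self : IsUnit (G.walkSeries c c) :=
  isUnit_iff_constantCoeff.mpr (by simp [walkSeries, ← coeff_zero_eq_constantCoeff_apply])

variable {c}

theorem walkSeries_mul_escapeSeries (hw : w ≠ c) (x : V) :
    G.walkSeries x c * G.escapeSeries c w =
      mk fun n => (G ^ (n + 1)) x w - (G.eraseRowCol c ^ (n + 1)) x w := by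
  ext n
  simp [coeff_mul, walkSeries, escapeSeries, pow_succ_apply_sub_eraseRowCol_pow_succ_apply G hw]

theorem escapeSeries_eq_C_mul {p : α} (hu : u ≠ c) (hv : v ≠ c)
    (h : ∀ k, (G ^ k) c u = p * (G ^ k) c v) :
    G.escapeSeries c u = C p * G.escapeSeries c v := by
  refine (G.isUnit_walkSeries_self c).mul_left_cancel ?_
  rw [mul_left_comm, G.walkSeries_mul_escapeSeries hu, G.walkSeries_mul_escapeSeries hv]
  ext n
  simp [G.eraseRowCol_pow_apply_left_of_ne hu, G.eraseRowCol_pow_apply_left_of_ne hv, h]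

theorem eraseRowCol_pow_apply_eq {p : α} (hp : p * p = 1) (hu : u ≠ c) (hv : v ≠ c)
    (hcosp : ∀ k, (G ^ k) u u = (G ^ k) v v)
    (hrow : ∀ k, (G ^ k) u c = p * (G ^ k) v c) (hcol : ∀ k, (G ^ k) c u = p * (G ^ k) c v) :
    ∀ k, (G.eraseRowCol c ^ k) u u = (G.eraseRowCol c ^ k) v v
  | 0 => by simp
  | n + 1 => by
    have hwalk : G.walkSeries u c = C p * G.walkSeries v c := by
      ext k; simp [walkSeries, hrow]
    have hprod :
        G.walkSeries u c * G.escapeSeries c u = G.walkSeries v c * G.escapeSeries c v := by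
      rw [hwalk, G.escapeSeries_eq_C_mul hu hv hcol, mul_mul_mul_comm, ← map_mul, hp, map_one,
        one_mul]
    rw [G.walkSeries_mul_escapeSeries hu, G.walkSeries_mul_escapeSeries hv] at hprod
    have hcoeff := congr_arg (coeff n) hprod
    simp only [coeff_mk] at hcoeff
    linear_combination hcosp (n + 1) - hcoeff

end CommRing

end Matrix

/-- Removal of a walk singlet preserves cospectrality: deleting the row and column
of a walk singlet `c` relative to the cospectral pair `(u,v)` keeps `u, v`
cospectral in the principal submatrix `R`. -/
theorem stmt12 {V : Type*} [Fintype V] [DecidableEq V]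
    (G : Matrix V V ℝ) (hsymm : G.IsSymm)
    (u v c : V) (hu : u ≠ c) (hv : v ≠ c) (p : ℝ) (hp : p = 1 ∨ p = -1)
    (hcosp : ∀ k : ℕ, (G ^ k) u u = (G ^ k) v v)
    (hsinglet : ∀ k : ℕ, (G ^ k) u c = p * (G ^ k) v c)
    (R : Matrix {i : V // i ≠ c} {i : V // i ≠ c} ℝ)
    (hR : R = G.submatrix (Subtype.val : {i : V // i ≠ c} → V) (Subtype.val : {i : V // i ≠ c} → V)) :
    ∀ k : ℕ, (R ^ k) ⟨u, hu⟩ ⟨u, hu⟩ = (R ^ k) ⟨v, hv⟩ ⟨v, hv⟩ := by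
  subst hR
  have hcol : ∀ k, (G ^ k) c u = p * (G ^ k) c v := fun k => by
    rw [(hsymm.pow k).apply u c, (hsymm.pow k).apply v c, hsinglet]
  have hp2 : p * p = 1 := by rcases hp with rfl | rfl <;> norm_num
  intro k
  rw [← G.submatrix_eraseRowCol_pow]
  exact G.eraseRowCol_pow_apply_eq hp2 hu hv hcosp hsinglet hcol k
end

section
/- Eigenvector relation on walk multiplets (converse direction): let H be a real symmetric N×N matrix with orthonormal eigenbasis {φ^ν} such that each eigenvector has definite parity on u,v (i.e., (φ^ν)_u = ±(φ^ν)_v, possibly both zero), eigenvectors with nonzero components on u,v and parity −p have pairwise distinct eigenvalues, and (φ^ν)_u ≠ 0 for those. If g ∈ ℝ^N satisfies (H^k g)_u = p·(H^k g)_v for all k ∈ {0,...,N−1}, then ⟨φ^ν, g⟩ = 0 for every eigenvector φ^ν with (φ^ν)_u = −p·(φ^ν)_v ≠ 0. -/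
open Matrix Polynomial Finset

/-!
Expand `g` in the eigenbasis with coefficients `c_ν = ⟨φ^ν, g⟩`. By the parity assumption,
`(φ^μ)_u - p (φ^μ)_v` vanishes unless `φ^μ` has parity `-p` with nonzero entries, where it is
`2 (φ^μ)_u`. So the hypotheses say `∑_{μ ∈ S} λ_μ^k · 2 (φ^μ)_u c_μ = 0` for all `k < N`, with
`S` the set of such eigenvectors. Since the `λ_μ`, `μ ∈ S`, are distinct and `|S| ≤ N`, pairing
this Vandermonde system with the Lagrange basis polynomial of `λ_ν` on `S` isolates
`2 (φ^ν)_u c_ν = 0`.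
-/

theorem Matrix.eq_sum_mul_dotProduct_of_orthonormal {n R : Type*} [Fintype n] [DecidableEq n]
    [CommRing R] {φ : n → n → R} (hφ : ∀ ν μ, φ ν ⬝ᵥ φ μ = if ν = μ then 1 else 0)
    (x : n → R) (i : n) : x i = ∑ μ, φ μ i * (φ μ ⬝ᵥ x) := by
  have hrows : of φ * (of φ)ᵀ = 1 := by
    ext ν μ
    simpa [mul_apply, one_apply, dotProduct] using hφ ν μ
  have hcols : (of φ)ᵀ * of φ = 1 := mul_eq_one_comm.mp hrows
  calc x i = (((of φ)ᵀ * of φ) *ᵥ x) i := by rw [hcols, one_mulVec]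
    _ = ∑ μ, φ μ i * (φ μ ⬝ᵥ x) := by
        rw [← mulVec_mulVec]; simp [mulVec, dotProduct]

theorem Matrix.IsSymm.dotProduct_pow_mulVec {n R : Type*} [Fintype n] [DecidableEq n]
    [CommRing R] {H : Matrix n n R} (hH : H.IsSymm) {φ : n → R} {c : R}
    (hφ : H *ᵥ φ = c • φ) (g : n → R) (k : ℕ) : φ ⬝ᵥ (H ^ k *ᵥ g) = c ^ k * (φ ⬝ᵥ g) := by
  induction k with
  | zero => simp
  | succ k ih =>
    have hleft : φ ᵥ* H = c • φ := by rw [← hH.eq, vecMul_transpose, hφ]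
    rw [pow_succ', ← mulVec_mulVec, dotProduct_mulVec, hleft, smul_dotProduct, ih, smul_eq_mul,
      pow_succ]
    ring

theorem sub_mul_eq_ite_of_eq_or_eq_neg {R : Type*} [CommRing R] [DecidableEq R] {a b p : R}
    (hp : p = 1 ∨ p = -1) (hab : a = b ∨ a = -b) :
    a - p * b = if a = -p * b ∧ a ≠ 0 then 2 * a else 0 := by
  split_ifs with h
  · linear_combination (-1 : R) * h.1
  · rw [not_and_not_right] at h
    rcases hp with rfl | rfl <;> rcases hab with rfl | rfl
    · ring
    · linear_combination 2 * h (by ring)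
    · linear_combination 2 * h (by ring)
    · ring

theorem eq_zero_of_forall_sum_pow_mul_eq_zero {K ι : Type*} [Field K] [DecidableEq ι]
    {s : Finset ι} {x a : ι → K} {N : ℕ} (hsN : #s ≤ N) (hx : Set.InjOn x s)
    (h : ∀ k < N, ∑ i ∈ s, x i ^ k * a i = 0) {j : ι} (hj : j ∈ s) : a j = 0 := by
  set P := Lagrange.basis s x j
  have hP : P.natDegree < N := by
    have := card_pos.mpr ⟨j, hj⟩
    rw [Lagrange.natDegree_basis hx hj]
    omega
  calc a j = ∑ i ∈ s, P.eval (x i) * a i := by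
        rw [sum_eq_single_of_mem j hj fun i hi hij => by
          rw [Lagrange.eval_basis_of_ne hij.symm hi, zero_mul], Lagrange.eval_basis_self hx hj,
          one_mul]
    _ = ∑ k ∈ range N, P.coeff k * ∑ i ∈ s, x i ^ k * a i := by
        simp only [eval_eq_sum_range' hP, sum_mul, mul_sum, mul_assoc]
        exact sum_comm
    _ = 0 := sum_eq_zero fun k hk => by rw [h k (mem_range.mp hk), mul_zero]

/-- Eigenvector relation on walk multiplets (converse direction): if `g` satisfies
the walk-multiplet condition with parity `p` for all powers `k < N`, then `g` is
orthogonal to every eigenvector of parity `−p` with nonzero components on `u,v`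
(assuming the corresponding eigenvalues are pairwise distinct). -/
theorem stmt14 {N : ℕ} (H : Matrix (Fin N) (Fin N) ℝ) (hsymm : H.IsSymm)
    (u v : Fin N) (p : ℝ) (hp : p = 1 ∨ p = -1)
    (φ : Fin N → (Fin N → ℝ)) (lam : Fin N → ℝ)
    (hortho : ∀ ν μ : Fin N, dotProduct (φ ν) (φ μ) = if ν = μ then 1 else 0)
    (heig : ∀ ν : Fin N, H.mulVec (φ ν) = lam ν • φ ν)
    (hparity : ∀ ν : Fin N, φ ν u = φ ν v ∨ φ ν u = -(φ ν v))
    (hdistinct : ∀ ν μ : Fin N, ν ≠ μ →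
      (φ ν u = -p * φ ν v ∧ φ ν u ≠ 0) →
      (φ μ u = -p * φ μ v ∧ φ μ u ≠ 0) → lam ν ≠ lam μ)
    (g : Fin N → ℝ)
    (hmul : ∀ k : ℕ, k < N → ((H ^ k).mulVec g) u = p * ((H ^ k).mulVec g) v) :
    ∀ ν : Fin N, φ ν u = -p * φ ν v → φ ν u ≠ 0 → dotProduct (φ ν) g = 0 := by
  intro ν hνu hν0
  set S := univ.filter fun μ => φ μ u = -p * φ μ v ∧ φ μ u ≠ 0
  have hinj : Set.InjOn lam S := fun μ hμ μ' hμ' heq => by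
    by_contra hne
    exact hdistinct μ μ' hne (mem_filter.mp hμ).2 (mem_filter.mp hμ').2 heq
  have hsys : ∀ k < N, ∑ μ ∈ S, lam μ ^ k * (2 * φ μ u * (φ μ ⬝ᵥ g)) = 0 := by
    intro k hk
    calc ∑ μ ∈ S, lam μ ^ k * (2 * φ μ u * (φ μ ⬝ᵥ g))
        = ∑ μ, (φ μ u - p * φ μ v) * (φ μ ⬝ᵥ (H ^ k *ᵥ g)) := by
          simp only [sub_mul_eq_ite_of_eq_or_eq_neg hp (hparity _), ite_mul, zero_mul, sum_ite,
            sum_const_zero, add_zero, (hsymm.dotProduct_pow_mulVec (heig _) g k)]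
          exact sum_congr rfl fun μ _ => by ring
      _ = (H ^ k *ᵥ g) u - p * (H ^ k *ᵥ g) v := by
          rw [eq_sum_mul_dotProduct_of_orthonormal hortho (H ^ k *ᵥ g) u,
            eq_sum_mul_dotProduct_of_orthonormal hortho (H ^ k *ᵥ g) v, mul_sum, ← sum_sub_distrib]
          exact sum_congr rfl fun μ _ => by ring
      _ = 0 := by rw [hmul k hk, sub_self]
  have hcard : #S ≤ N := (card_le_univ S).trans (Fintype.card_fin N).le
  simpa [hν0] using
    eq_zero_of_forall_sum_pow_mul_eq_zero hcard hinj hsys (mem_filter.mpr ⟨mem_univ ν, hνu, hν0⟩)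
end

section
/- Choice of eigenbasis with definite parity (existence): let H be a real symmetric N×N matrix with cospectral vertices u, v, i.e., (H^k)_{uu} = (H^k)_{vv} for all k ∈ ℕ. Then there exists an orthonormal eigenbasis {φ^ν} of H such that for every ν, (φ^ν)_u = (φ^ν)_v or (φ^ν)_u = −(φ^ν)_v, and moreover for each eigenvalue λ there is at most one basis eigenvector with eigenvalue λ satisfying (φ)_u = (φ)_v ≠ 0 and at most one satisfying (φ)_u = −(φ)_v ≠ 0. -/
/-!
Let `P_μ` be the orthogonal projection onto the `μ`-eigenspace of `H`. Since
`(H ^ k) w w = ∑ μ, μ ^ k * ‖P_μ e_w‖ ^ 2`, cospectrality and the invertibility of Vandermonde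
matrices give `‖P_μ e_u‖ = ‖P_μ e_v‖`, i.e. `P_μ (e_u + e_v) ⟂ P_μ (e_u - e_v)`. In each
eigenspace, extend the normalisations of these two orthogonal vectors to an orthonormal basis.
For a vector `x` of that eigenspace `⟪P_μ (e_u ± e_v), x⟫ = x u ± x v`, so every basis vector has
a definite parity, and only the basis vector proportional to `P_μ (e_u ± e_v)` can have
`x u ± x v ≠ 0`.
-/

open Module Module.End
open scoped RealInnerProductSpace

theorem Module.End.pow_apply_of_mem_eigenspace {R M : Type*} [CommRing R] [AddCommGroup M]
    [Module R M] {f : End R M} {μ : R} {x : M} (hx : x ∈ eigenspace f μ) (k : ℕ) :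
    (f ^ k) x = μ ^ k • x := by
  induction k with
  | zero => simp
  | succ k ih =>
    rw [pow_succ', mul_apply, ih, map_smul, mem_eigenspace_iff.mp hx, smul_smul, pow_succ]

theorem eq_zero_of_forall_sum_pow_mul_eq_zero_s15 {ι R : Type*} [Fintype ι] [CommRing R] [IsDomain R]
    {f c : ι → R} (hf : Function.Injective f) (h : ∀ k : ℕ, ∑ i, f i ^ k * c i = 0) : c = 0 := by
  let e := Fintype.equivFin ι
  have := Matrix.eq_zero_of_forall_pow_sum_mul_pow_eq_zero (f := f ∘ e.symm) (v := c ∘ e.symm)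
    (hf.comp e.symm.injective) fun k => by
      simpa [mul_comm, e.symm.sum_comp (fun i => c i * f i ^ (k : ℕ))] using h k
  ext i
  simpa using congrFun this (e i)

section OrthonormalBasis

variable {F : Type*} [NormedAddCommGroup F] [InnerProductSpace ℝ F]

theorem Orthonormal.inner_eq_zero_or_eq_normalize {s : Set F}
    (hs : Orthonormal ℝ ((↑) : s → F)) {p x : F} (hp : p ≠ 0 → ‖p‖⁻¹ • p ∈ s) (hx : x ∈ s) :
    ⟪p, x⟫ = 0 ∨ x = ‖p‖⁻¹ • p := by
  classical
  rcases eq_or_ne p 0 with rfl | hp0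
  · simp
  by_cases hxp : x = ‖p‖⁻¹ • p
  · exact Or.inr hxp
  left
  have h := (orthonormal_subtype_iff_ite.mp hs) _ (hp hp0) x hx
  rw [if_neg (Ne.symm hxp), real_inner_smul_left] at h
  simpa [hp0] using h

variable [FiniteDimensional ℝ F]

theorem exists_orthonormalBasis_adapted_to_orthogonal_pair {p q : F} (hpq : ⟪p, q⟫ = 0) :
    ∃ b : OrthonormalBasis (Fin (finrank ℝ F)) ℝ F,
      (∀ i, ⟪p, b i⟫ = 0 ∨ ⟪q, b i⟫ = 0) ∧
      (∀ i j, ⟪p, b i⟫ ≠ 0 → ⟪p, b j⟫ ≠ 0 → i = j) ∧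
      (∀ i j, ⟪q, b i⟫ ≠ 0 → ⟪q, b j⟫ ≠ 0 → i = j) := by
  classical
  set s : Set F := {‖p‖⁻¹ • p, ‖q‖⁻¹ • q} \ {0}
  have hnorm : ∀ v ∈ s, ‖v‖ = 1 := by
    rintro v ⟨rfl | rfl, hv0⟩ <;>
      exact norm_smul_inv_norm (by rintro rfl; simp at hv0)
  have hperp : ⟪‖p‖⁻¹ • p, ‖q‖⁻¹ • q⟫ = 0 := by
    simp [real_inner_smul_left, real_inner_smul_right, hpq]
  have hs : Orthonormal ℝ ((↑) : s → F) := by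
    rw [orthonormal_subtype_iff_ite]
    intro v hv w hw
    split_ifs with hvw
    · rw [← hvw, real_inner_self_eq_norm_sq, hnorm v hv, one_pow]
    · obtain ⟨rfl | rfl, -⟩ := hv <;> obtain ⟨rfl | rfl, -⟩ := hw
      · exact absurd rfl hvw
      · exact hperp
      · rw [real_inner_comm]; exact hperp
      · exact absurd rfl hvw
  obtain ⟨u, b, hsu, hb⟩ := hs.exists_orthonormalBasis_extension
  have hu : Orthonormal ℝ (Subtype.val : {x // x ∈ (u : Set F)} → F) := hb ▸ b.orthonormal
  have hp : ∀ x : F, x ∈ u → ⟪p, x⟫ = 0 ∨ x = ‖p‖⁻¹ • p := fun x hx =>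
    hu.inner_eq_zero_or_eq_normalize (fun hp => hsu ⟨by simp, by simpa using hp⟩) hx
  have hq : ∀ x : F, x ∈ u → ⟪q, x⟫ = 0 ∨ x = ‖q‖⁻¹ • q := fun x hx =>
    hu.inner_eq_zero_or_eq_normalize (fun hq => hsu ⟨by simp, by simpa using hq⟩) hx
  let b' := b.reindex (b.toBasis.indexEquiv (finBasis ℝ F))
  have hb' : ∀ i, b' i ∈ u := fun i => by simp [b', hb]
  refine ⟨b', fun i => ?_, fun i j hi hj => ?_, fun i j hi hj => ?_⟩
  · rcases hp _ (hb' i) with h | h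
    · exact Or.inl h
    · right; rw [h, real_inner_smul_right, real_inner_comm, hpq, mul_zero]
  · exact b'.toBasis.injective
      (((hp _ (hb' i)).resolve_left hi).trans ((hp _ (hb' j)).resolve_left hj).symm)
  · exact b'.toBasis.injective
      (((hq _ (hb' i)).resolve_left hi).trans ((hq _ (hb' j)).resolve_left hj).symm)

end OrthonormalBasis

namespace LinearMap.IsSymmetric

variable {E : Type*} [NormedAddCommGroup E] [InnerProductSpace ℝ E] [FiniteDimensional ℝ E]
  {T : E →ₗ[ℝ] E}

theorem inner_pow_apply_self (hT : T.IsSymmetric) (x : E) (k : ℕ) :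
    ⟪x, (T ^ k) x⟫ =
      ∑ μ : Eigenvalues T, (μ : ℝ) ^ k * ‖(eigenspace T μ).starProjection x‖ ^ 2 := by
  have hx : ∑ μ : Eigenvalues T, (eigenspace T μ).starProjection x = x :=
    hT.orthogonalFamily_eigenspaces'.sum_projection_of_mem_iSup x <| by
      rw [Submodule.orthogonal_eq_bot_iff.mp hT.orthogonalComplement_iSup_eigenspaces_eq_bot']
      trivial
  calc ⟪x, (T ^ k) x⟫
      = ⟪x, (T ^ k) (∑ μ : Eigenvalues T, (eigenspace T μ).starProjection x)⟫ := by
        rw [hx]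
    _ = ∑ μ : Eigenvalues T, (μ : ℝ) ^ k * ‖(eigenspace T μ).starProjection x‖ ^ 2 := by
        simp only [map_sum, inner_sum]
        refine Finset.sum_congr rfl fun μ _ => ?_
        set P := (eigenspace T μ).starProjection
        have hPx : P x ∈ eigenspace T μ := Submodule.starProjection_apply_mem _ _
        rw [pow_apply_of_mem_eigenspace hPx, real_inner_smul_right,
          ← Submodule.starProjection_eq_self_iff.mpr hPx,
          ← Submodule.inner_starProjection_left_eq_right, real_inner_self_eq_norm_sq,
          Submodule.starProjection_eq_self_iff.mpr hPx]

theorem norm_starProjection_eigenspace_eq (hT : T.IsSymmetric) {x y : E}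
    (hxy : ∀ k : ℕ, ⟪x, (T ^ k) x⟫ = ⟪y, (T ^ k) y⟫) (μ : Eigenvalues T) :
    ‖(eigenspace T μ).starProjection x‖ = ‖(eigenspace T μ).starProjection y‖ := by
  have h := eq_zero_of_forall_sum_pow_mul_eq_zero_s15 (f := fun μ : Eigenvalues T => (μ : ℝ))
    (c := fun μ =>
      ‖(eigenspace T μ).starProjection x‖ ^ 2 - ‖(eigenspace T μ).starProjection y‖ ^ 2)
    Subtype.val_injective fun k => by
      simp only [mul_sub, Finset.sum_sub_distrib, ← inner_pow_apply_self hT, hxy, sub_self]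
  exact (sq_eq_sq₀ (norm_nonneg _) (norm_nonneg _)).mp (sub_eq_zero.mp (congrFun h μ))

theorem exists_eigenbasis_adapted_of_forall_inner_pow_eq (hT : T.IsSymmetric) {n : ℕ}
    (hn : finrank ℝ E = n) {x y : E} (hxy : ∀ k : ℕ, ⟪x, (T ^ k) x⟫ = ⟪y, (T ^ k) y⟫) :
    ∃ (b : OrthonormalBasis (Fin n) ℝ E) (lam : Fin n → ℝ),
      (∀ i, T (b i) = lam i • b i) ∧
      (∀ i, ⟪x + y, b i⟫ = 0 ∨ ⟪x - y, b i⟫ = 0) ∧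
      (∀ i j, lam i = lam j → ⟪x + y, b i⟫ ≠ 0 → ⟪x + y, b j⟫ ≠ 0 → i = j) ∧
      (∀ i j, lam i = lam j → ⟪x - y, b i⟫ ≠ 0 → ⟪x - y, b j⟫ ≠ 0 → i = j) := by
  classical
  let P (μ : Eigenvalues T) := (eigenspace T μ).orthogonalProjectionOnto
  have horth : ∀ μ, ⟪P μ (x + y), P μ (x - y)⟫ = 0 := fun μ => by
    rw [map_add, map_sub, real_inner_add_sub_eq_zero_iff]
    exact hT.norm_starProjection_eigenspace_eq hxy μ
  choose B hB using fun μ => exists_orthonormalBasis_adapted_to_orthogonal_pair (horth μ)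
  let ι := Σ μ : Eigenvalues T, Fin (finrank ℝ (eigenspace T μ))
  let b₀ := hT.direct_sum_isInternal.collectedOrthonormalBasis hT.orthogonalFamily_eigenspaces' B
  have hinner : ∀ (a : ι) (w : E), ⟪P a.1 w, B a.1 a.2⟫ = ⟪w, b₀ a⟫ := fun a w => by
    simp [b₀, DirectSum.IsInternal.collectedOrthonormalBasis, P]
  have heig : ∀ a : ι, T (b₀ a) = (a.1 : ℝ) • b₀ a := fun a =>
    mem_eigenspace_iff.mp (hT.direct_sum_isInternal.collectedOrthonormalBasis_mem _ B a)
  have huniq : ∀ w, (∀ μ k l, ⟪P μ w, B μ k⟫ ≠ 0 → ⟪P μ w, B μ l⟫ ≠ 0 → k = l) →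
      ∀ a a' : ι, a.1 = a'.1 → ⟪w, b₀ a⟫ ≠ 0 → ⟪w, b₀ a'⟫ ≠ 0 → a = a' := by
    rintro w hw ⟨μ, k⟩ ⟨μ', l⟩ (rfl : μ = μ') hk hl
    rw [← hinner] at hk hl
    rw [hw μ k l hk hl]
  let e := b₀.toBasis.indexEquiv (finBasisOfFinrankEq ℝ E hn)
  refine ⟨b₀.reindex e, fun i => (e.symm i).1, fun i => ?_, fun i => ?_,
    fun i j hij hi hj => ?_, fun i j hij hi hj => ?_⟩
  · simpa using heig (e.symm i)
  · simpa only [OrthonormalBasis.reindex_apply, ← hinner] using (hB (e.symm i).1).1 (e.symm i).2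
  · simp only [OrthonormalBasis.reindex_apply] at hi hj
    exact e.symm.injective (huniq _ (fun μ => (hB μ).2.1) _ _ (Subtype.ext hij) hi hj)
  · simp only [OrthonormalBasis.reindex_apply] at hi hj
    exact e.symm.injective (huniq _ (fun μ => (hB μ).2.2) _ _ (Subtype.ext hij) hi hj)

end LinearMap.IsSymmetric

theorem Matrix.inner_single_toEuclideanLin_pow_single {n : Type*} [Fintype n] [DecidableEq n]
    (A : Matrix n n ℝ) (k : ℕ) (i : n) :
    ⟪EuclideanSpace.single i 1, (A.toEuclideanLin ^ k) (EuclideanSpace.single i 1)⟫ =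
      (A ^ k) i i := by
  simp [← Matrix.toLpLin_pow, EuclideanSpace.inner_single_left, Matrix.toLpLin_apply]

theorem EuclideanSpace.inner_single_one_add_single_one {n : Type*} [Fintype n] [DecidableEq n]
    (i j : n) (z : EuclideanSpace ℝ n) :
    ⟪EuclideanSpace.single i 1 + EuclideanSpace.single j 1, z⟫ = z i + z j := by
  simp [inner_add_left, EuclideanSpace.inner_single_left]

theorem EuclideanSpace.inner_single_one_sub_single_one {n : Type*} [Fintype n] [DecidableEq n]
    (i j : n) (z : EuclideanSpace ℝ n) :
    ⟪EuclideanSpace.single i 1 - EuclideanSpace.single j 1, z⟫ = z i - z j := by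
  simp [inner_sub_left, EuclideanSpace.inner_single_left]

/-- Choice of eigenbasis with definite parity: a real symmetric matrix with a
cospectral pair `(u,v)` admits an orthonormal eigenbasis in which every eigenvector
has definite parity on `u,v`, with at most one eigenvector per eigenvalue of even
parity with nonzero components on `u,v`, and at most one of odd parity. -/
theorem stmt15 {N : ℕ} (H : Matrix (Fin N) (Fin N) ℝ) (hsymm : H.IsSymm)
    (u v : Fin N)
    (hcosp : ∀ k : ℕ, (H ^ k) u u = (H ^ k) v v) :
    ∃ (φ : Fin N → (Fin N → ℝ)) (lam : Fin N → ℝ),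
      (∀ ν μ : Fin N, dotProduct (φ ν) (φ μ) = if ν = μ then 1 else 0) ∧
      (∀ ν : Fin N, H.mulVec (φ ν) = lam ν • φ ν) ∧
      (∀ ν : Fin N, φ ν u = φ ν v ∨ φ ν u = -(φ ν v)) ∧
      (∀ ν μ : Fin N, ν ≠ μ → lam ν = lam μ →
        (φ ν u = φ ν v ∧ φ ν u ≠ 0) → ¬(φ μ u = φ μ v ∧ φ μ u ≠ 0)) ∧
      (∀ ν μ : Fin N, ν ≠ μ → lam ν = lam μ →
        (φ ν u = -(φ ν v) ∧ φ ν u ≠ 0) → ¬(φ μ u = -(φ μ v) ∧ φ μ u ≠ 0)) := by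
  have hT := Matrix.isSymmetric_toEuclideanLin_iff.mpr (Matrix.isHermitian_iff_isSymm.mpr hsymm)
  obtain ⟨b, lam, heig, hpar, heven, hodd⟩ :=
    hT.exists_eigenbasis_adapted_of_forall_inner_pow_eq finrank_euclideanSpace_fin
      (x := EuclideanSpace.single u 1) (y := EuclideanSpace.single v 1) fun k => by
        rw [Matrix.inner_single_toEuclideanLin_pow_single,
          Matrix.inner_single_toEuclideanLin_pow_single, hcosp]
  have hplus := EuclideanSpace.inner_single_one_add_single_one u v
  have hminus := EuclideanSpace.inner_single_one_sub_single_one u v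
  refine ⟨fun ν => (b ν).ofLp, lam, fun ν μ => ?_, fun ν => ?_, fun ν => ?_, ?_, ?_⟩
  · rw [← orthonormal_iff_ite.mp b.orthonormal ν μ]
    simp [PiLp.inner_apply, dotProduct, mul_comm]
  · simpa [Matrix.toLpLin_apply] using congrArg WithLp.ofLp (heig ν)
  · rcases hpar ν with h | h
    · rw [hplus] at h; exact Or.inr (eq_neg_of_add_eq_zero_left h)
    · rw [hminus] at h; exact Or.inl (sub_eq_zero.mp h)
  · rintro ν μ hne hl ⟨hν, hν0⟩ ⟨hμ, hμ0⟩
    beta_reduce at hν hν0 hμ hμ0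
    refine hne (heven ν μ hl ?_ ?_)
    · rw [hplus]; exact fun h => hν0 (by linarith)
    · rw [hplus]; exact fun h => hμ0 (by linarith)
  · rintro ν μ hne hl ⟨hν, hν0⟩ ⟨hμ, hμ0⟩
    beta_reduce at hν hν0 hμ hμ0
    refine hne (hodd ν μ hl ?_ ?_)
    · rw [hminus]; exact fun h => hν0 (by linarith)
    · rw [hminus]; exact fun h => hμ0 (by linarith)
end

section
/- Walk singlet forces zero eigenvector components (special case): let H be a real symmetric matrix with cospectral vertices u, v, eigenvector basis chosen with definite parity, and let c be a walk singlet of parity −p relative to (u,v), i.e., (H^k)_{uc} = −p·(H^k)_{vc} for all k. If the eigenvalues of eigenvectors with parity p and nonzero components on u,v are pairwise distinct, then every such eigenvector φ (with φ_u = p·φ_v ≠ 0) satisfies φ_c = 0. -/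
/-!
Expanding `H ^ k` in the orthonormal eigenbasis gives
`(H ^ k) u c + p (H ^ k) v c = ∑ ν, λ_ν ^ k (φ_ν u + p φ_ν v) φ_ν c`, which the singlet condition
makes vanish for every `k`. The weight `(φ_ν u + p φ_ν v) φ_ν c` is zero unless `φ_ν` has parity `p`
and `φ_ν u ≠ 0`, and on those `ν` the eigenvalues are distinct, so testing the vanishing moments
against a Lagrange basis polynomial isolates a single weight `2 φ_ν u φ_ν c`, which must be zero.
-/

open Matrix Polynomial Finset

section Spectral

variable {n R : Type*} [Fintype n] [DecidableEq n] [CommRing R]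

theorem sum_mul_eq_one_apply_of_orthonormal {φ : n → n → R}
    (hortho : ∀ ν μ, φ ν ⬝ᵥ φ μ = if ν = μ then 1 else 0) (i j : n) :
    ∑ ν, φ ν i * φ ν j = (1 : Matrix n n R) i j := by
  set P : Matrix n n R := Matrix.of φ
  have hPPt : P * Pᵀ = 1 := by
    ext ν μ
    simpa [P, Matrix.mul_apply, dotProduct, Matrix.one_apply] using hortho ν μ
  -- a one-sided inverse of a square matrix is two-sided: rows orthonormal ⇒ columns orthonormal
  have hPtP : Pᵀ * P = 1 := mul_eq_one_comm.mp hPPt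
  simpa [P, Matrix.mul_apply] using congrFun₂ hPtP i j

theorem pow_mulVec_of_mulVec_eq_smul {H : Matrix n n R} {x : n → R} {c : R}
    (hx : H *ᵥ x = c • x) (k : ℕ) : (H ^ k) *ᵥ x = c ^ k • x := by
  induction k with
  | zero => simp
  | succ k ih => rw [pow_succ, ← mulVec_mulVec, hx, mulVec_smul, ih, smul_smul, pow_succ']

theorem pow_apply_eq_sum_of_orthonormal {H : Matrix n n R} {φ : n → n → R} {lam : n → R}
    (hortho : ∀ ν μ, φ ν ⬝ᵥ φ μ = if ν = μ then 1 else 0)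
    (heig : ∀ ν, H *ᵥ φ ν = lam ν • φ ν) (k : ℕ) (i j : n) :
    (H ^ k) i j = ∑ ν, lam ν ^ k * (φ ν i * φ ν j) := by
  calc (H ^ k) i j = ∑ l, (H ^ k) i l * (1 : Matrix n n R) l j := by
        simp [Matrix.one_apply]
    _ = ∑ ν, ((H ^ k) *ᵥ φ ν) i * φ ν j := by
        simp only [← sum_mul_eq_one_apply_of_orthonormal hortho, mulVec, dotProduct, mul_sum,
          sum_mul]
        exact sum_comm.trans (sum_congr rfl fun _ _ => sum_congr rfl fun _ _ => by ring)
    _ = ∑ ν, lam ν ^ k * (φ ν i * φ ν j) := by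
        simp only [pow_mulVec_of_mulVec_eq_smul (heig _), Pi.smul_apply, smul_eq_mul, mul_assoc]

end Spectral

section Moments

variable {ι : Type*} {s : Finset ι}

theorem sum_eval_mul_eq_zero_of_sum_pow_mul_eq_zero {R : Type*} [CommSemiring R]
    {x a : ι → R} (h : ∀ k : ℕ, ∑ ν ∈ s, x ν ^ k * a ν = 0) (q : R[X]) :
    ∑ ν ∈ s, q.eval (x ν) * a ν = 0 := by
  simp only [eval_eq_sum_range, sum_mul]
  rw [sum_comm]
  refine sum_eq_zero fun k _ => ?_
  simp only [mul_assoc, ← mul_sum, h, mul_zero]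

theorem eq_zero_of_sum_pow_mul_eq_zero {F : Type*} [Field F] [DecidableEq ι] {x a : ι → F}
    (hx : Set.InjOn x s) (h : ∀ k : ℕ, ∑ ν ∈ s, x ν ^ k * a ν = 0) {ν : ι} (hν : ν ∈ s) :
    a ν = 0 := by
  have key := sum_eval_mul_eq_zero_of_sum_pow_mul_eq_zero h (Lagrange.basis s x ν)
  rwa [sum_eq_single_of_mem ν hν fun μ hμ hμν => by
      rw [Lagrange.eval_basis_of_ne hμν.symm hμ, zero_mul],
    Lagrange.eval_basis_self hx hν, one_mul] at key

end Moments

theorem add_mul_eq_zero_of_sign {p x y : ℝ} (hp : p = 1 ∨ p = -1) (hxy : x = y ∨ x = -y)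
    (h : x = p * y → x = 0) : x + p * y = 0 := by
  rcases hp with rfl | rfl <;> rcases hxy with rfl | rfl <;> grind

theorem stmt17_general {N : ℕ} (H : Matrix (Fin N) (Fin N) ℝ)
    (u v c : Fin N) (p : ℝ) (hp : p = 1 ∨ p = -1)
    (φ : Fin N → (Fin N → ℝ)) (lam : Fin N → ℝ)
    (hortho : ∀ ν μ : Fin N, dotProduct (φ ν) (φ μ) = if ν = μ then 1 else 0)
    (heig : ∀ ν : Fin N, H.mulVec (φ ν) = lam ν • φ ν)
    (hparity : ∀ ν : Fin N, φ ν u = φ ν v ∨ φ ν u = -(φ ν v))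
    (hsinglet : ∀ k : ℕ, (H ^ k) u c = -p * (H ^ k) v c)
    (hdistinct : ∀ ν μ : Fin N, ν ≠ μ →
      (φ ν u = p * φ ν v ∧ φ ν u ≠ 0) →
      (φ μ u = p * φ μ v ∧ φ μ u ≠ 0) → lam ν ≠ lam μ) :
    ∀ ν : Fin N, φ ν u = p * φ ν v → φ ν u ≠ 0 → φ ν c = 0 := by
  intro ν₀ hpar₀ hne₀
  set S := univ.filter fun ν => φ ν u = p * φ ν v ∧ φ ν u ≠ 0
  have hoff : ∀ ν ∉ S, (φ ν u + p * φ ν v) * φ ν c = 0 := fun ν hν => by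
    rw [add_mul_eq_zero_of_sign hp (hparity ν) fun h => by by_contra h'; simp_all [S], zero_mul]
  have hmoments (k : ℕ) : ∑ ν ∈ S, lam ν ^ k * ((φ ν u + p * φ ν v) * φ ν c) = 0 := by
    rw [sum_subset (subset_univ S) fun ν _ hν => by rw [hoff ν hν, mul_zero]]
    calc _ = (H ^ k) u c + p * (H ^ k) v c := by
          simp only [pow_apply_eq_sum_of_orthonormal hortho heig, mul_sum, ← sum_add_distrib]
          exact sum_congr rfl fun _ _ => by ring
      _ = 0 := by rw [hsinglet]; ring
  have hinj : Set.InjOn lam S := fun ν hν μ hμ hlam => by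
    by_contra hνμ
    exact hdistinct ν μ hνμ (mem_filter.mp hν).2 (mem_filter.mp hμ).2 hlam
  have h₀ := eq_zero_of_sum_pow_mul_eq_zero hinj hmoments (mem_filter.mpr ⟨mem_univ _, hpar₀, hne₀⟩)
  rw [← hpar₀, ← two_mul] at h₀
  simpa [hne₀] using h₀

/-- Walk singlet forces zero eigenvector components: if `c` is a walk singlet of
parity `−p` relative to the cospectral pair `(u,v)` and the eigenvalues of the
parity-`p` eigenvectors with nonzero components on `u,v` are pairwise distinct,
then every such eigenvector vanishes on `c`. -/
theorem stmt17 {N : ℕ} (H : Matrix (Fin N) (Fin N) ℝ) (hsymm : H.IsSymm)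
    (u v c : Fin N) (p : ℝ) (hp : p = 1 ∨ p = -1)
    (φ : Fin N → (Fin N → ℝ)) (lam : Fin N → ℝ)
    (hortho : ∀ ν μ : Fin N, dotProduct (φ ν) (φ μ) = if ν = μ then 1 else 0)
    (heig : ∀ ν : Fin N, H.mulVec (φ ν) = lam ν • φ ν)
    (hparity : ∀ ν : Fin N, φ ν u = φ ν v ∨ φ ν u = -(φ ν v))
    (hsinglet : ∀ k : ℕ, (H ^ k) u c = -p * (H ^ k) v c)
    (hdistinct : ∀ ν μ : Fin N, ν ≠ μ →
      (φ ν u = p * φ ν v ∧ φ ν u ≠ 0) →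
      (φ μ u = p * φ μ v ∧ φ μ u ≠ 0) → lam ν ≠ lam μ) :
    ∀ ν : Fin N, φ ν u = p * φ ν v → φ ν u ≠ 0 → φ ν c = 0 :=
  stmt17_general H u v c p hp φ lam hortho heig hparity hsinglet hdistinct
end

section
/- Cospectrality is equivalent to equality of characteristic polynomials of vertex-deleted submatrices: for a real symmetric N×N matrix H and indices u ≠ v, (H^k)_{uu} = (H^k)_{vv} holds for all non-negative integers k if and only if the characteristic polynomials of the principal submatrices H∖u and H∖v (obtained by deleting row and column u, resp. v) are equal. -/
open Polynomial Matrix Finset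

/-- charmatrix of a principal submatrix along an injective map. -/
lemma charmatrix_submatrix_inj {n m : ℕ} (H : Matrix (Fin n) (Fin n) ℝ)
    (f : Fin m → Fin n) (hf : Function.Injective f) :
    Matrix.charmatrix (H.submatrix f f) = (Matrix.charmatrix H).submatrix f f := by
  refine Matrix.ext fun i j => ?_
  rw [Matrix.submatrix_apply]
  by_cases h : i = j
  · subst h; simp
  · rw [Matrix.charmatrix_apply_ne _ _ _ h,
      Matrix.charmatrix_apply_ne _ _ _ (fun hh => h (hf hh))]
    rfl

lemma charpoly_submatrix_eq_adjugate {n : ℕ} (H : Matrix (Fin (n+1)) (Fin (n+1)) ℝ)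
    (u : Fin (n+1)) :
    (H.submatrix u.succAbove u.succAbove).charpoly
      = Matrix.adjugate (Matrix.charmatrix H) u u := by
  rw [Matrix.charpoly, charmatrix_submatrix_inj H _ (Fin.succAbove_right_injective),
    Matrix.adjugate_fin_succ_eq_det_submatrix, Even.neg_one_pow ⟨u, rfl⟩, one_mul]

lemma smul_one_mapC {n : ℕ} (a : ℝ) :
    (Polynomial.C : ℝ →+* ℝ[X]).mapMatrix (a • (1 : Matrix (Fin n) (Fin n) ℝ))
      = Polynomial.C a • (1 : Matrix (Fin n) (Fin n) ℝ[X]) := by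
  refine Matrix.ext fun i j => ?_
  simp [Matrix.one_apply, apply_ite Polynomial.C]

/-- Cospectrality is equivalent to equality of characteristic polynomials of the
vertex-deleted principal submatrices `H∖u` and `H∖v`. -/
theorem stmt18 {N : ℕ} (H : Matrix (Fin (N + 1)) (Fin (N + 1)) ℝ) (hsymm : H.IsSymm)
    (u v : Fin (N + 1)) (huv : u ≠ v) :
    (∀ k : ℕ, (H ^ k) u u = (H ^ k) v v) ↔
      (H.submatrix u.succAbove u.succAbove).charpoly
        = (H.submatrix v.succAbove v.succAbove).charpoly := by
  classical
  set mapC := (Polynomial.C : ℝ →+* ℝ[X]).mapMatrix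
    (m := Fin (N+1)) with hmapC
  set c : ℕ → ℝ := fun j => H.charpoly.coeff j with hc
  have hdeg : H.charpoly.natDegree = N + 1 := by
    rw [Matrix.charpoly_natDegree_eq_dim, Fintype.card_fin]
  have hmon : c (N+1) = 1 := by
    have h := H.charpoly_monic
    rw [Polynomial.Monic, Polynomial.leadingCoeff, hdeg] at h
    exact h
  have hCH : ∑ i ∈ Finset.range (N+2), c i • H ^ i = 0 := by
    have h1 := H.aeval_self_charpoly
    rwa [Polynomial.aeval_eq_sum_range, hdeg] at h1
  set Q : ℕ → Matrix (Fin (N+1)) (Fin (N+1)) ℝ :=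
    fun k => ∑ i ∈ Finset.range (N+1-k), c (k+1+i) • H ^ i with hQ
  have hQN : Q N = 1 := by
    simp only [hQ]
    rw [show N+1-N = 1 by omega]
    simp [hmon]
  have hrel : ∀ k, k < N → H * Q (k+1) + c (k+1) • 1 = Q k := by
    intro k hk
    have hn : N + 1 - k = (N + 1 - (k+1)) + 1 := by omega
    simp only [hQ]
    rw [hn, Finset.sum_range_succ', Finset.mul_sum]
    congr 1
    refine Finset.sum_congr rfl fun i _ => ?_
    rw [mul_smul_comm, ← pow_succ', show k+1+(i+1) = k+1+1+i from by omega]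
  have h0 : H * Q 0 = -(c 0 • (1 : Matrix (Fin (N+1)) (Fin (N+1)) ℝ)) := by
    have h1 := hCH
    rw [Finset.sum_range_succ'] at h1
    simp only [pow_zero] at h1
    have h2 : ∑ i ∈ Finset.range (N+1), c (i+1) • H ^ (i+1) = -(c 0 • 1) :=
      eq_neg_of_add_eq_zero_left h1
    simp only [hQ]
    rw [Finset.mul_sum, ← h2]
    refine Finset.sum_congr rfl fun i _ => ?_
    rw [mul_smul_comm, ← pow_succ', show 0+1+i = i+1 from by omega]
  set G : Matrix (Fin (N+1)) (Fin (N+1)) ℝ[X] :=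
    ∑ k ∈ Finset.range (N+1), (Polynomial.X : ℝ[X])^k • mapC (Q k) with hGdef
  have hchm : Matrix.charmatrix H
      = (Polynomial.X : ℝ[X]) • (1 : Matrix (Fin (N+1)) (Fin (N+1)) ℝ[X]) - mapC H := by
    refine Matrix.ext fun i j => ?_
    by_cases h : i = j
    · subst h
      simp [hmapC]
    · simp [Matrix.charmatrix_apply_ne _ _ _ h, Matrix.one_apply_ne h, hmapC]
  have hmul : Matrix.charmatrix H * G
      = H.charpoly • (1 : Matrix (Fin (N+1)) (Fin (N+1)) ℝ[X]) := by
    have hP : H.charpoly • (1 : Matrix (Fin (N+1)) (Fin (N+1)) ℝ[X])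
        = ∑ k ∈ Finset.range N, (Polynomial.C (c (k+1)) * Polynomial.X^(k+1))
            • (1 : Matrix (Fin (N+1)) (Fin (N+1)) ℝ[X])
          + (Polynomial.X : ℝ[X])^(N+1) • 1 + Polynomial.C (c 0) • 1 := by
      conv_lhs => rw [H.charpoly.as_sum_range_C_mul_X_pow, hdeg]
      rw [show H.charpoly.coeff = c from rfl]
      rw [Finset.sum_smul, Finset.sum_range_succ, Finset.sum_range_succ', hmon]
      simp only [Polynomial.C_1, one_mul, pow_zero, mul_one]
      abel
    rw [hchm, sub_mul, smul_mul_assoc, one_mul, hGdef, Finset.smul_sum, Finset.mul_sum]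
    have e1 : ∀ k ∈ Finset.range (N+1),
        (Polynomial.X : ℝ[X]) • ((Polynomial.X : ℝ[X])^k • mapC (Q k))
          = (Polynomial.X : ℝ[X])^(k+1) • mapC (Q k) := fun k _ => by
      rw [smul_smul, ← pow_succ']
    have e2 : ∀ k ∈ Finset.range (N+1),
        mapC H * ((Polynomial.X : ℝ[X])^k • mapC (Q k))
          = (Polynomial.X : ℝ[X])^k • mapC (H * Q k) := fun k _ => by
      rw [mul_smul_comm, ← mapC.map_mul]
    rw [Finset.sum_congr rfl e1, Finset.sum_congr rfl e2,
      Finset.sum_range_succ, Finset.sum_range_succ']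
    have e4 : ∀ k ∈ Finset.range N,
        (Polynomial.X : ℝ[X])^(k+1) • mapC (H * Q (k+1))
          = (Polynomial.X : ℝ[X])^(k+1) • mapC (Q k)
            - (Polynomial.C (c (k+1)) * Polynomial.X^(k+1)) • 1 := by
      intro k hk
      have h5 : H * Q (k+1) = Q k - c (k+1) • 1 := by
        rw [← hrel k (Finset.mem_range.mp hk)]; abel
      rw [h5, mapC.map_sub, smul_sub, hmapC, smul_one_mapC, smul_smul, mul_comm]
    have h6 : mapC (-(c 0 • (1 : Matrix (Fin (N+1)) (Fin (N+1)) ℝ)))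
        = -(Polynomial.C (c 0) • 1) := by rw [mapC.map_neg, hmapC, smul_one_mapC]
    rw [Finset.sum_congr rfl e4, Finset.sum_sub_distrib, hQN, mapC.map_one, h0, h6, hP]
    simp only [pow_zero, one_smul]
    abel
  have hPne : H.charpoly ≠ 0 := H.charpoly_monic.ne_zero
  have hadj : Matrix.adjugate (Matrix.charmatrix H) = G := by
    have h1 : H.charpoly • Matrix.adjugate (Matrix.charmatrix H) = H.charpoly • G := by
      calc H.charpoly • Matrix.adjugate (Matrix.charmatrix H)
          = Matrix.adjugate (Matrix.charmatrix H) * (H.charpoly • 1) := by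
            rw [mul_smul_comm, mul_one]
        _ = Matrix.adjugate (Matrix.charmatrix H) * (Matrix.charmatrix H * G) := by rw [hmul]
        _ = (Matrix.adjugate (Matrix.charmatrix H) * Matrix.charmatrix H) * G :=
            (mul_assoc _ _ _).symm
        _ = H.charpoly • G := by
            rw [Matrix.adjugate_mul, show (Matrix.charmatrix H).det = H.charpoly from rfl,
              smul_mul_assoc, one_mul]
    refine Matrix.ext fun i j => ?_
    have h2 := congrArg (fun M => M i j) h1
    simp only [Matrix.smul_apply, smul_eq_mul] at h2
    exact mul_left_cancel₀ hPne h2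
  have hcp : ∀ w : Fin (N+1), (H.submatrix w.succAbove w.succAbove).charpoly
      = ∑ k ∈ Finset.range (N+1), Polynomial.C (Q k w w) * Polynomial.X ^ k := by
    intro w
    rw [charpoly_submatrix_eq_adjugate, hadj, hGdef, Matrix.sum_apply]
    refine Finset.sum_congr rfl fun k _ => ?_
    rw [Matrix.smul_apply, smul_eq_mul, mul_comm]
    rfl
  constructor
  · intro hmom
    have hQw : ∀ k, Q k u u = Q k v v := by
      intro k
      simp only [hQ, Matrix.sum_apply, Matrix.smul_apply, smul_eq_mul]
      exact Finset.sum_congr rfl fun i _ => by rw [hmom i]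
    rw [hcp u, hcp v]
    exact Finset.sum_congr rfl fun k _ => by rw [hQw k]
  · intro hcharp k
    have hQuv : ∀ m, m < N+1 → Q m u u = Q m v v := by
      intro m hm
      have h1 : (∑ k ∈ Finset.range (N+1), Polynomial.C (Q k u u) * Polynomial.X ^ k).coeff m
          = (∑ k ∈ Finset.range (N+1), Polynomial.C (Q k v v) * Polynomial.X ^ k).coeff m := by
        rw [← hcp u, ← hcp v, hcharp]
      simpa [Polynomial.finset_sum_coeff, Polynomial.coeff_C_mul, Polynomial.coeff_X_pow,
        Finset.sum_ite_eq, Finset.mem_range.mpr hm] using h1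
    have hd : ∀ i, i < N+1 → (H^i) u u = (H^i) v v := by
      intro i
      induction i using Nat.strong_induction_on with
      | _ i ih =>
        intro hi
        have h2 := hQuv (N - i) (by omega)
        simp only [hQ, Matrix.sum_apply, Matrix.smul_apply, smul_eq_mul] at h2
        rw [show N + 1 - (N - i) = i + 1 from by omega, Finset.sum_range_succ,
          Finset.sum_range_succ, show N - i + 1 + i = N + 1 from by omega, hmon,
          one_mul, one_mul] at h2
        have hrest : ∑ t ∈ Finset.range i, c (N-i+1+t) * (H^t) u u
            = ∑ t ∈ Finset.range i, c (N-i+1+t) * (H^t) v v :=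
          Finset.sum_congr rfl fun t ht => by
            have ht' := Finset.mem_range.mp ht
            rw [ih t ht' (by omega)]
        rw [hrest] at h2
        exact add_left_cancel h2
    induction k using Nat.strong_induction_on with
    | _ k ih =>
      by_cases hk : k < N + 1
      · exact hd k hk
      · have h3 : H^(N+1) = -∑ i ∈ Finset.range (N+1), c i • H^i := by
          have h4 := hCH
          rw [Finset.sum_range_succ, hmon, one_smul] at h4
          exact eq_neg_of_add_eq_zero_right h4
        have hpow : H^k = -∑ i ∈ Finset.range (N+1), c i • H^(k-(N+1)+i) := by
          calc H^k = H^(k-(N+1)) * H^(N+1) := by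
                rw [← pow_add, show k-(N+1)+(N+1) = k from by omega]
            _ = -∑ i ∈ Finset.range (N+1), c i • H^(k-(N+1)+i) := by
                rw [h3, mul_neg, Finset.mul_sum]
                congr 1
                exact Finset.sum_congr rfl fun i _ => by rw [mul_smul_comm, ← pow_add]
        rw [hpow]
        simp only [Matrix.neg_apply, Matrix.sum_apply, Matrix.smul_apply, smul_eq_mul]
        congr 1
        exact Finset.sum_congr rfl fun i hi => by
          rw [ih (k-(N+1)+i) (by have := Finset.mem_range.mp hi; omega)]
end
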